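/- arXiv:math/0610925 — 3 statements merged into one kernel-verified Lean document; each statement's English description precedes it below -/
import Mathlib

section
/- For every natural number n > 2, every tromino tiling of the 3×n rectangle R(3,n) has a fault line; that is, no rectangle R(3,n) with n > 2 admits a faultfree tromino tiling. -/
/-- The m×n rectangle: cells {0,…,m−1}×{0,…,n−1}. -/
def rect (m n : ℕ) : Finset (ℕ × ℕ) := Finset.range m ×ˢ Finset.range n

/-- The 2×2 block with top-left corner (i,j). -/
def block (i j : ℕ) : Finset (ℕ × ℕ) :=
  {(i, j), (i, j + 1), (i + 1, j), (i + 1, j + 1)}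

/-- An L-tromino: a 2×2 block minus one of its cells. -/
def IsLTromino (T : Finset (ℕ × ℕ)) : Prop :=
  ∃ i j c, c ∈ block i j ∧ T = block i j \ {c}

/-- A tromino tiling of R(m,n): a partition of the rectangle into L-trominoes. -/
def IsTrominoTiling (m n : ℕ) (𝒯 : Finset (Finset (ℕ × ℕ))) : Prop :=
  (∀ T ∈ 𝒯, IsLTromino T) ∧
  (∀ T₁ ∈ 𝒯, ∀ T₂ ∈ 𝒯, T₁ ≠ T₂ → Disjoint T₁ T₂) ∧
  𝒯.sup id = rect m n

/-- Tile T crosses the i-th horizontal grid line. -/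
def CrossesH (T : Finset (ℕ × ℕ)) (i : ℕ) : Prop :=
  (∃ c ∈ T, c.1 < i) ∧ (∃ c ∈ T, i ≤ c.1)

/-- Tile T crosses the j-th vertical grid line. -/
def CrossesV (T : Finset (ℕ × ℕ)) (j : ℕ) : Prop :=
  (∃ c ∈ T, c.2 < j) ∧ (∃ c ∈ T, j ≤ c.2)

/-- A tiling of R(m,n) is faultfree if every interior horizontal and vertical
grid line is crossed by some tile. -/
def IsFaultfree (m n : ℕ) (𝒯 : Finset (Finset (ℕ × ℕ))) : Prop :=
  (∀ i, 0 < i → i < m → ∃ T ∈ 𝒯, CrossesH T i) ∧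
  (∀ j, 0 < j → j < n → ∃ T ∈ 𝒯, CrossesV T j)

open Classical in
/-- The number of tiles of 𝒯 crossing the i-th horizontal grid line. -/
noncomputable def crossCountH (𝒯 : Finset (Finset (ℕ × ℕ))) (i : ℕ) : ℕ :=
  (𝒯.filter fun T => CrossesH T i).card

open Classical in
/-- The number of tiles of 𝒯 crossing the j-th vertical grid line. -/
noncomputable def crossCountV (𝒯 : Finset (Finset (ℕ × ℕ))) (j : ℕ) : ℕ :=
  (𝒯.filter fun T => CrossesV T j).card

/-! Every L-tromino lies in two adjacent columns, so it crosses exactly one vertical grid line,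
and a tiling of R(3,n) consists of n tiles. The 3v cells left of the v-th vertical line are
whole tiles plus one or two cells of each tile crossing it, so a line crossed by exactly one
tile is impossible mod 3. In a faultfree tiling each of the n − 1 interior vertical lines is
therefore crossed by at least two tiles, whence 2(n − 1) ≤ n, i.e. n ≤ 2. -/

open Finset

section Crossing

variable {T : Finset (ℕ × ℕ)} {v : ℕ}

lemma CrossesV.card_filter_snd_lt_pos (h : CrossesV T v) : 0 < #{p ∈ T | p.2 < v} := by
  obtain ⟨⟨p, hp, hpv⟩, -⟩ := h
  exact card_pos.2 ⟨p, mem_filter.2 ⟨hp, hpv⟩⟩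

lemma CrossesV.card_filter_snd_lt_lt_card (h : CrossesV T v) : #{p ∈ T | p.2 < v} < #T := by
  obtain ⟨-, ⟨p, hp, hvp⟩⟩ := h
  refine card_lt_card ⟨filter_subset _ _, fun hsub => ?_⟩
  have := (mem_filter.1 (hsub hp)).2
  omega

lemma card_filter_snd_lt_of_not_crossesV (h : ¬ CrossesV T v) :
    #{p ∈ T | p.2 < v} = 0 ∨ #{p ∈ T | p.2 < v} = #T := by
  by_cases hleft : ∃ p ∈ T, p.2 < v
  · right
    rw [filter_true_of_mem fun p hp => not_le.1 fun hvp => h ⟨hleft, p, hp, hvp⟩]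
  · left
    push Not at hleft
    simpa using hleft

lemma CrossesV.eq_add_one {j : ℕ} (h : CrossesV T v) (hT : ∀ p ∈ T, p.2 = j ∨ p.2 = j + 1) :
    v = j + 1 := by
  obtain ⟨⟨p, hp, hpv⟩, ⟨q, hq, hvq⟩⟩ := h
  rcases hT p hp with _ | _ <;> rcases hT q hq with _ | _ <;> omega

end Crossing

lemma mem_block {i j : ℕ} {p : ℕ × ℕ} :
    p ∈ block i j ↔ (p.1 = i ∨ p.1 = i + 1) ∧ (p.2 = j ∨ p.2 = j + 1) := by
  obtain ⟨a, b⟩ := p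
  simp only [block, mem_insert, mem_singleton, Prod.ext_iff]
  tauto

lemma card_block (i j : ℕ) : #(block i j) = 4 := by
  simp [block, Prod.ext_iff]

namespace IsLTromino

variable {T : Finset (ℕ × ℕ)}

lemma card_eq_three (h : IsLTromino T) : #T = 3 := by
  obtain ⟨i, j, c, hc, rfl⟩ := h
  rw [card_sdiff_of_subset (singleton_subset_iff.2 hc), card_block, card_singleton]

lemma crossesV_unique (h : IsLTromino T) {v w : ℕ} (hv : CrossesV T v) (hw : CrossesV T w) :
    v = w := by
  obtain ⟨i, j, c, -, rfl⟩ := h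
  have hcols : ∀ p ∈ block i j \ {c}, p.2 = j ∨ p.2 = j + 1 :=
    fun p hp => (mem_block.1 (mem_sdiff.1 hp).1).2
  rw [hv.eq_add_one hcols, hw.eq_add_one hcols]

lemma card_filter_snd_lt_of_crossesV (h : IsLTromino T) {v : ℕ} (hv : CrossesV T v) :
    #{p ∈ T | p.2 < v} = 1 ∨ #{p ∈ T | p.2 < v} = 2 := by
  have := hv.card_filter_snd_lt_pos
  have := hv.card_filter_snd_lt_lt_card
  rw [h.card_eq_three] at this
  omega

end IsLTromino

lemma card_filter_rect_snd_lt {m n v : ℕ} (hv : v ≤ n) : #{p ∈ rect m n | p.2 < v} = m * v := by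
  have : {p ∈ rect m n | p.2 < v} = range m ×ˢ range v := by
    ext p
    simp only [rect, mem_filter, mem_product, mem_range]
    omega
  simp [this]

namespace IsTrominoTiling

variable {m n : ℕ} {𝒯 : Finset (Finset (ℕ × ℕ))}

lemma sum_card_filter (h : IsTrominoTiling m n 𝒯) (P : ℕ × ℕ → Prop) [DecidablePred P] :
    ∑ T ∈ 𝒯, #{p ∈ T | P p} = #{p ∈ rect m n | P p} := by
  obtain ⟨-, hdisj, hunion⟩ := h
  rw [← hunion, sup_eq_biUnion, filter_biUnion]
  exact (card_biUnion fun T₁ h₁ T₂ h₂ hne => disjoint_filter_filter (hdisj T₁ h₁ T₂ h₂ hne)).symm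

lemma three_mul_card (h : IsTrominoTiling m n 𝒯) : 3 * #𝒯 = m * n := by
  have hsum := h.sum_card_filter fun _ => True
  simp only [filter_true] at hsum
  rw [sum_congr rfl fun T hT => (h.1 T hT).card_eq_three, sum_const, smul_eq_mul] at hsum
  rw [mul_comm, hsum]
  simp [rect]

lemma crossCountV_ne_one (h : IsTrominoTiling m n 𝒯) (hm : 3 ∣ m) {v : ℕ} (hv : v ≤ n) :
    crossCountV 𝒯 v ≠ 1 := by
  classical
  intro hone
  obtain ⟨T₀, hfilter⟩ := card_eq_one.1 hone
  have hsplit := sum_filter_add_sum_filter_not 𝒯 (fun T => CrossesV T v)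
    fun T => #{p ∈ T | p.2 < v}
  have hT₀ : T₀ ∈ 𝒯 ∧ CrossesV T₀ v := mem_filter.1 (hfilter ▸ mem_singleton_self T₀)
  have hcross := (h.1 T₀ hT₀.1).card_filter_snd_lt_of_crossesV hT₀.2
  have hrest : 3 ∣ ∑ T ∈ 𝒯 with ¬ CrossesV T v, #{p ∈ T | p.2 < v} := by
    refine dvd_sum fun T hT => ?_
    obtain ⟨hT, hnot⟩ := mem_filter.1 hT
    rcases card_filter_snd_lt_of_not_crossesV hnot with h0 | h3
    · simp [h0]
    · simp [h3, (h.1 T hT).card_eq_three]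
  rw [hfilter, sum_singleton, h.sum_card_filter, card_filter_rect_snd_lt hv] at hsplit
  have : 3 ∣ m * v := dvd_mul_of_dvd_left hm v
  omega

lemma two_le_crossCountV (h : IsTrominoTiling m n 𝒯) (hm : 3 ∣ m) {v : ℕ} (hv : v ≤ n)
    {T : Finset (ℕ × ℕ)} (hT : T ∈ 𝒯) (hTv : CrossesV T v) : 2 ≤ crossCountV 𝒯 v := by
  classical
  have hpos : 0 < crossCountV 𝒯 v := card_pos.2 ⟨T, mem_filter.2 ⟨hT, hTv⟩⟩
  have := h.crossCountV_ne_one hm hv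
  omega

end IsTrominoTiling

lemma sum_crossCountV_le_card {𝒯 : Finset (Finset (ℕ × ℕ))} (h𝒯 : ∀ T ∈ 𝒯, IsLTromino T)
    (s : Finset ℕ) : ∑ v ∈ s, crossCountV 𝒯 v ≤ #𝒯 := by
  classical
  calc ∑ v ∈ s, crossCountV 𝒯 v
      = ∑ T ∈ 𝒯, #(s.bipartiteBelow (fun v T => CrossesV T v) T) :=
        sum_card_bipartiteAbove_eq_sum_card_bipartiteBelow _
    _ ≤ ∑ _T ∈ 𝒯, 1 := sum_le_sum fun T hT => card_le_one.2 fun v hv w hw =>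
        (h𝒯 T hT).crossesV_unique (mem_filter.1 hv).2 (mem_filter.1 hw).2
    _ = #𝒯 := (card_eq_sum_ones 𝒯).symm

/-- No rectangle R(3,n) with n > 2 admits a faultfree tromino tiling. -/
theorem no_faultfree_tiling_of_three_by_n (n : ℕ) (hn : 2 < n)
    (𝒯 : Finset (Finset (ℕ × ℕ))) (hT : IsTrominoTiling 3 n 𝒯) :
    ¬ IsFaultfree 3 n 𝒯 := by
  rintro ⟨-, hcrossed⟩
  have htwo : ∀ v ∈ Icc 1 (n - 1), 2 ≤ crossCountV 𝒯 v := fun v hv => by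
    rw [mem_Icc] at hv
    obtain ⟨T, hT𝒯, hTv⟩ := hcrossed v (by omega) (by omega)
    exact hT.two_le_crossCountV dvd_rfl (by omega) hT𝒯 hTv
  have hsum := (card_nsmul_le_sum _ _ 2 htwo).trans (sum_crossCountV_le_card hT.1 _)
  have hcard := hT.three_mul_card
  rw [Nat.card_Icc, smul_eq_mul] at hsum
  omega
end

section
/- For every natural number t ≥ 3, the number of faultfree tromino tilings of the 4×3t rectangle R(4,3t) is exactly 8·6^(t−3). -/
namespace FFP

abbrev Pl := Fin 3 × Fin 4

def lc (p : Pl) : Finset (Fin 4) :=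
  ![{p.1.castSucc, p.1.succ}, {p.1.castSucc, p.1.succ}, {p.1.castSucc}, {p.1.succ}] p.2

def rc (p : Pl) : Finset (Fin 4) :=
  ![{p.1.castSucc}, {p.1.succ}, {p.1.castSucc, p.1.succ}, {p.1.castSucc, p.1.succ}] p.2

def lz (P : Finset Pl) : Finset (Fin 4) := P.sup lc
def rz (P : Finset Pl) : Finset (Fin 4) := P.sup rc

lemma lc_nonempty (p : Pl) : (lc p).Nonempty := by
  obtain ⟨i, k⟩ := p; fin_cases k <;> simp [lc]

lemma rc_nonempty (p : Pl) : (rc p).Nonempty := by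
  obtain ⟨i, k⟩ := p; fin_cases k <;> simp [rc]

lemma subset_lz {P : Finset Pl} {p : Pl} (h : p ∈ P) : lc p ⊆ lz P := Finset.le_sup (f := lc) h
lemma subset_rz {P : Finset Pl} {p : Pl} (h : p ∈ P) : rc p ⊆ rz P := Finset.le_sup (f := rc) h
lemma lz_subset {P : Finset Pl} {s : Finset (Fin 4)} (h : ∀ q ∈ P, lc q ⊆ s) : lz P ⊆ s := Finset.sup_le h
lemma mem_lz {x : Fin 4} {P : Finset Pl} : x ∈ lz P ↔ ∃ p ∈ P, x ∈ lc p := Finset.mem_sup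
lemma mem_rz {x : Fin 4} {P : Finset Pl} : x ∈ rz P ↔ ∃ p ∈ P, x ∈ rc p := Finset.mem_sup

/-- The pairwise-disjointness condition for a set of placements. -/
def PD (P : Finset Pl) : Prop :=
  ∀ p ∈ P, ∀ q ∈ P, p ≠ q → Disjoint (lc p) (lc q) ∧ Disjoint (rc p) (rc q)

/-- Fuel-based builder enumerating all placement sets whose left cells
partition `need` and whose right cells are pairwise disjoint and disjoint
from `used`. -/
def build : ℕ → Finset (Fin 4) → Finset (Fin 4) → Finset (Finset Pl)
  | 0, need, _ => if need = ∅ then {∅} else ∅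
  | f + 1, need, used =>
    if h : need = ∅ then {∅}
    else
      (Finset.univ.filter (fun p : Pl =>
          need.min' (Finset.nonempty_iff_ne_empty.2 h) ∈ lc p ∧ lc p ⊆ need ∧
          Disjoint (rc p) used)).biUnion
        (fun p => (build f (need \ lc p) (used ∪ rc p)).image (insert p))

def steps (S : Finset (Fin 4)) : Finset (Finset Pl) :=
  (build 4 Sᶜ ∅).filter (· ≠ ∅)

lemma build_sound : ∀ (f : ℕ) (need used : Finset (Fin 4)) (P : Finset Pl),
    P ∈ build f need used →
    lz P = need ∧ PD P ∧ (∀ p ∈ P, Disjoint (rc p) used) := by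
  intro f
  induction f with
  | zero =>
    intro need used P hP
    by_cases h : need = ∅ <;> simp [build, h] at hP
    subst hP; subst h
    refine ⟨rfl, ?_, ?_⟩ <;> simp [PD]
  | succ f ih =>
    intro need used P hP
    by_cases h : need = ∅
    · simp [build, h] at hP
      subst hP; subst h
      refine ⟨rfl, ?_, ?_⟩ <;> simp [PD]
    · simp only [build, dif_neg h, Finset.mem_biUnion, Finset.mem_filter,
        Finset.mem_univ, true_and, Finset.mem_image] at hP
      obtain ⟨p, ⟨hmin, hsub, hdisj⟩, P', hP', rfl⟩ := hP
      obtain ⟨hlz, hpd, hrc⟩ := ih (need \ lc p) (used ∪ rc p) P' hP'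
      have hpnotin : p ∉ P' := by
        intro hmem
        have : lc p ⊆ need \ lc p := hlz ▸ subset_lz hmem
        have := this (lc_nonempty p).choose_spec
        simp at this
        exact this.2 ((lc_nonempty p).choose_spec)
      have hlc_disj : ∀ q ∈ P', Disjoint (lc p) (lc q) := by
        intro q hq
        have : lc q ⊆ need \ lc p := hlz ▸ subset_lz hq
        exact Finset.disjoint_left.2 fun x hx hx' => (Finset.mem_sdiff.1 (this hx')).2 hx
      have hrc_disj : ∀ q ∈ P', Disjoint (rc p) (rc q) := by
        intro q hq
        exact Finset.disjoint_left.2 fun x hx hx' =>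
          (Finset.disjoint_left.1 (hrc q hq) hx' (Finset.mem_union_right _ hx))
      refine ⟨?_, ?_, ?_⟩
      · rw [lz, Finset.sup_insert, ← lz, hlz, Finset.sup_eq_union]
        exact (Finset.union_sdiff_of_subset hsub)
      · intro a ha b hb hab
        rcases Finset.mem_insert.1 ha with rfl | ha'
        · rcases Finset.mem_insert.1 hb with rfl | hb'
          · exact absurd rfl hab
          · exact ⟨hlc_disj b hb', hrc_disj b hb'⟩
        · rcases Finset.mem_insert.1 hb with rfl | hb'
          · exact ⟨(hlc_disj a ha').symm, (hrc_disj a ha').symm⟩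
          · exact hpd a ha' b hb' hab
      · intro q hq
        rcases Finset.mem_insert.1 hq with rfl | hq'
        · exact hdisj
        · exact Finset.disjoint_left.2 fun x hx hx' =>
            Finset.disjoint_left.1 (hrc q hq') hx (Finset.mem_union_left _ hx')

lemma build_complete : ∀ (f : ℕ) (need used : Finset (Fin 4)) (P : Finset Pl),
    need.card ≤ f → lz P = need → PD P → (∀ p ∈ P, Disjoint (rc p) used) →
    P ∈ build f need used := by
  intro f
  induction f with
  | zero =>
    intro need used P hcard hlz hpd _
    have hne : need = ∅ := Finset.card_eq_zero.1 (Nat.le_zero.1 hcard)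
    have hP : P = ∅ := by
      by_contra h
      obtain ⟨p, hp⟩ := Finset.nonempty_iff_ne_empty.2 h
      have : lc p ⊆ need := hlz ▸ subset_lz hp
      have := this (lc_nonempty p).choose_spec
      simp [hne] at this
    simp [build, hne, hP]
  | succ f ih =>
    intro need used P hcard hlz hpd hdisj
    by_cases h : need = ∅
    · have hP : P = ∅ := by
        by_contra hne
        obtain ⟨p, hp⟩ := Finset.nonempty_iff_ne_empty.2 hne
        have : lc p ⊆ need := hlz ▸ subset_lz hp
        have := this (lc_nonempty p).choose_spec
        simp [h] at this
      simp [build, h, hP]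
    · set r := need.min' (Finset.nonempty_iff_ne_empty.2 h) with hr
      have hrneed : r ∈ need := Finset.min'_mem _ _
      obtain ⟨p₀, hp₀P, hrp₀⟩ : ∃ p₀ ∈ P, r ∈ lc p₀ := by
        rw [← hlz] at hrneed
        exact mem_lz.1 hrneed
      have hsub : lc p₀ ⊆ need := hlz ▸ subset_lz hp₀P
      simp only [build, dif_neg h, Finset.mem_biUnion, Finset.mem_filter,
        Finset.mem_univ, true_and, Finset.mem_image]
      refine ⟨p₀, ⟨hrp₀, hsub, hdisj p₀ hp₀P⟩, P.erase p₀, ?_, Finset.insert_erase hp₀P⟩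
      apply ih
      · have hlt : (need \ lc p₀).card < need.card := by
          apply Finset.card_lt_card
          constructor
          · exact Finset.sdiff_subset
          · intro hsup
            have := hsup hrneed
            simp at this
            exact this.2 hrp₀
        omega
      · apply Finset.Subset.antisymm
        · apply lz_subset
          intro q hq
          have hq' : q ∈ P := Finset.mem_of_mem_erase hq
          have hqp : q ≠ p₀ := Finset.ne_of_mem_erase hq
          have h1 : lc q ⊆ need := hlz ▸ subset_lz hq'
          have h2 : Disjoint (lc q) (lc p₀) := ((hpd q hq' p₀ hp₀P hqp).1)
          intro x hx
          exact Finset.mem_sdiff.2 ⟨h1 hx, fun hx' => Finset.disjoint_left.1 h2 hx hx'⟩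
        · intro x hx
          obtain ⟨hx1, hx2⟩ := Finset.mem_sdiff.1 hx
          rw [← hlz] at hx1
          obtain ⟨q, hqP, hxq⟩ := mem_lz.1 hx1
          exact mem_lz.2 ⟨q, Finset.mem_erase.2 ⟨fun hh => hx2 (hh ▸ hxq), hqP⟩, hxq⟩
      · intro a ha b hb hab
        exact hpd a (Finset.mem_of_mem_erase ha) b (Finset.mem_of_mem_erase hb) hab
      · intro q hq
        have hq' : q ∈ P := Finset.mem_of_mem_erase hq
        have hqp : q ≠ p₀ := Finset.ne_of_mem_erase hq
        rw [Finset.disjoint_union_right]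
        exact ⟨hdisj q hq', (hpd q hq' p₀ hp₀P hqp).2⟩

lemma mem_steps (S : Finset (Fin 4)) (P : Finset Pl) :
    P ∈ steps S ↔ P ≠ ∅ ∧ PD P ∧ lz P = Sᶜ := by
  constructor
  · intro hP
    obtain ⟨h1, h2⟩ := Finset.mem_filter.1 hP
    obtain ⟨ha, hb, _⟩ := build_sound 4 Sᶜ ∅ P h1
    exact ⟨h2, hb, ha⟩
  · rintro ⟨h1, h2, h3⟩
    refine Finset.mem_filter.2 ⟨?_, h1⟩
    apply build_complete 4 Sᶜ ∅ P _ h3 h2 (fun p _ => Finset.disjoint_empty_right _)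
    calc Sᶜ.card ≤ (Finset.univ : Finset (Fin 4)).card := Finset.card_le_univ _
    _ = 4 := by simp


/-- The tile at column pair (j, j+1) given by placement p. -/
def dec (j : ℕ) (p : Pl) : Finset (ℕ × ℕ) :=
  (lc p).image (fun r : Fin 4 => ((r : ℕ), j)) ∪ (rc p).image (fun r : Fin 4 => ((r : ℕ), j + 1))

lemma mem_dec {a b j : ℕ} {p : Pl} :
    (a, b) ∈ dec j p ↔ (b = j ∧ ∃ r ∈ lc p, (r : ℕ) = a) ∨ (b = j + 1 ∧ ∃ r ∈ rc p, (r : ℕ) = a) := by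
  simp only [dec, Finset.mem_union, Finset.mem_image, Prod.mk.injEq]
  constructor
  · rintro (⟨r, hr, h1, h2⟩ | ⟨r, hr, h1, h2⟩)
    · exact Or.inl ⟨h2.symm, r, hr, h1⟩
    · exact Or.inr ⟨h2.symm, r, hr, h1⟩
  · rintro (⟨rfl, r, hr, h1⟩ | ⟨rfl, r, hr, h1⟩)
    · exact Or.inl ⟨r, hr, h1, rfl⟩
    · exact Or.inr ⟨r, hr, h1, rfl⟩

lemma dec_isLTromino (j : ℕ) (p : Pl) : IsLTromino (dec j p) := by
  obtain ⟨i, k⟩ := p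
  fin_cases i <;> fin_cases k
  · exact ⟨0, j, (1, j+1), by simp [block], by ext ⟨a,b⟩; simp [dec, lc, rc, block]; omega⟩
  · exact ⟨0, j, (0, j+1), by simp [block], by ext ⟨a,b⟩; simp [dec, lc, rc, block]; omega⟩
  · exact ⟨0, j, (1, j), by simp [block], by ext ⟨a,b⟩; simp [dec, lc, rc, block]; omega⟩
  · exact ⟨0, j, (0, j), by simp [block], by ext ⟨a,b⟩; simp [dec, lc, rc, block]; omega⟩
  · exact ⟨1, j, (2, j+1), by simp [block], by ext ⟨a,b⟩; simp [dec, lc, rc, block]; omega⟩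
  · exact ⟨1, j, (1, j+1), by simp [block], by ext ⟨a,b⟩; simp [dec, lc, rc, block]; omega⟩
  · exact ⟨1, j, (2, j), by simp [block], by ext ⟨a,b⟩; simp [dec, lc, rc, block]; omega⟩
  · exact ⟨1, j, (1, j), by simp [block], by ext ⟨a,b⟩; simp [dec, lc, rc, block]; omega⟩
  · exact ⟨2, j, (3, j+1), by simp [block], by ext ⟨a,b⟩; simp [dec, lc, rc, block]; omega⟩
  · exact ⟨2, j, (2, j+1), by simp [block], by ext ⟨a,b⟩; simp [dec, lc, rc, block]; omega⟩
  · exact ⟨2, j, (3, j), by simp [block], by ext ⟨a,b⟩; simp [dec, lc, rc, block]; omega⟩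
  · exact ⟨2, j, (2, j), by simp [block], by ext ⟨a,b⟩; simp [dec, lc, rc, block]; omega⟩

lemma dec_subset_rect {j n : ℕ} (p : Pl) (h : j + 2 ≤ n) : dec j p ⊆ rect 4 n := by
  rintro ⟨a, b⟩ hab
  rcases mem_dec.1 hab with ⟨rfl, r, _, rfl⟩ | ⟨rfl, r, _, rfl⟩ <;>
    · simp only [rect, Finset.mem_product, Finset.mem_range]
      exact ⟨r.isLt, by omega⟩

lemma crossesH_dec {j m : ℕ} {p : Pl} : CrossesH (dec j p) m ↔ m = (p.1 : ℕ) + 1 := by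
  obtain ⟨i, k⟩ := p
  fin_cases i <;> fin_cases k <;>
    · simp only [CrossesH, dec, lc, rc]
      simp [Prod.exists]
      omega

lemma crossesV_dec {j m : ℕ} {p : Pl} : CrossesV (dec j p) m ↔ m = j + 1 := by
  obtain ⟨i, k⟩ := p
  fin_cases i <;> fin_cases k <;>
    · simp only [CrossesV, dec, lc, rc]
      simp [Prod.exists]
      omega

lemma dec_col_mem {j : ℕ} {p : Pl} {c : ℕ × ℕ} (h : c ∈ dec j p) : c.2 = j ∨ c.2 = j + 1 := by
  obtain ⟨a, b⟩ := c
  rcases mem_dec.1 h with ⟨rfl, _⟩ | ⟨rfl, _⟩ <;> simp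

lemma dec_left_mem {j : ℕ} {p : Pl} {r : Fin 4} : ((r : ℕ), j) ∈ dec j p ↔ r ∈ lc p := by
  rw [mem_dec]
  constructor
  · rintro (⟨-, r', hr', hval⟩ | ⟨habs, -⟩)
    · rwa [Fin.val_injective hval] at hr'
    · omega
  · intro h; exact Or.inl ⟨rfl, r, h, rfl⟩

lemma dec_right_mem {j : ℕ} {p : Pl} {r : Fin 4} : ((r : ℕ), j + 1) ∈ dec j p ↔ r ∈ rc p := by
  rw [mem_dec]
  constructor
  · rintro (⟨habs, -⟩ | ⟨-, r', hr', hval⟩)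
    · omega
    · rwa [Fin.val_injective hval] at hr'
  · intro h; exact Or.inr ⟨rfl, r, h, rfl⟩

lemma dec_inj {j j' : ℕ} {p p' : Pl} (h : dec j p = dec j' p') : j = j' ∧ p = p' := by
  have hj : j = j' := by
    obtain ⟨r, hr⟩ := lc_nonempty p
    obtain ⟨r', hr'⟩ := lc_nonempty p'
    have h1 : ((r : ℕ), j) ∈ dec j' p' := h ▸ dec_left_mem.2 hr
    have h2 : ((r' : ℕ), j') ∈ dec j p := h ▸ dec_left_mem.2 hr'
    have := dec_col_mem h1
    have := dec_col_mem h2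
    simp at *; omega
  subst hj
  refine ⟨rfl, ?_⟩
  have hlc : lc p = lc p' := by
    ext r; rw [← dec_left_mem (j := j), ← dec_left_mem (j := j), h]
  have hrc : rc p = rc p' := by
    ext r; rw [← dec_right_mem (j := j), ← dec_right_mem (j := j), h]
  clear h
  revert hlc hrc
  revert p p'; decide

lemma tromino_eq_dec {T : Finset (ℕ × ℕ)} {n : ℕ} (hT : IsLTromino T) (hsub : T ⊆ rect 4 n) :
    ∃ (j : ℕ) (p : Pl), j + 2 ≤ n ∧ T = dec j p := by
  obtain ⟨i, j, c, hc, rfl⟩ := hT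
  obtain ⟨c1, c2⟩ := c
  simp only [block, Finset.mem_insert, Finset.mem_singleton, Prod.mk.injEq] at hc
  rcases hc with ⟨h1, h2⟩ | ⟨h1, h2⟩ | ⟨h1, h2⟩ | ⟨h1, h2⟩
  · have hb : ((i+1 : ℕ), (j+1 : ℕ)) ∈ block i j \ {(c1, c2)} := by
      simp only [block, Finset.mem_sdiff, Finset.mem_insert, Finset.mem_singleton, Prod.mk.injEq, and_true, true_and, or_true, true_or]
      omega
    have hbd := hsub hb
    simp only [rect, Finset.mem_product, Finset.mem_range] at hbd
    refine ⟨j, (⟨i, by omega⟩, 3), by omega, ?_⟩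
    ext ⟨a, b⟩
    simp [dec, lc, rc, block, Prod.ext_iff, Fin.ext_iff, Fin.exists_iff]
    omega
  · have hb : ((i+1 : ℕ), (j+1 : ℕ)) ∈ block i j \ {(c1, c2)} := by
      simp only [block, Finset.mem_sdiff, Finset.mem_insert, Finset.mem_singleton, Prod.mk.injEq, and_true, true_and, or_true, true_or]
      omega
    have hbd := hsub hb
    simp only [rect, Finset.mem_product, Finset.mem_range] at hbd
    refine ⟨j, (⟨i, by omega⟩, 1), by omega, ?_⟩
    ext ⟨a, b⟩
    simp [dec, lc, rc, block, Prod.ext_iff, Fin.ext_iff, Fin.exists_iff]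
    omega
  · have hb : ((i+1 : ℕ), (j+1 : ℕ)) ∈ block i j \ {(c1, c2)} := by
      simp only [block, Finset.mem_sdiff, Finset.mem_insert, Finset.mem_singleton, Prod.mk.injEq, and_true, true_and, or_true, true_or]
      omega
    have hbd := hsub hb
    simp only [rect, Finset.mem_product, Finset.mem_range] at hbd
    refine ⟨j, (⟨i, by omega⟩, 2), by omega, ?_⟩
    ext ⟨a, b⟩
    simp [dec, lc, rc, block, Prod.ext_iff, Fin.ext_iff, Fin.exists_iff]
    omega
  · have hb : ((i+1 : ℕ), (j : ℕ)) ∈ block i j \ {(c1, c2)} := by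
      simp only [block, Finset.mem_sdiff, Finset.mem_insert, Finset.mem_singleton, Prod.mk.injEq, and_true, true_and, or_true, true_or]
      omega
    have hbd := hsub hb
    simp only [rect, Finset.mem_product, Finset.mem_range] at hbd
    have hb2 : ((i : ℕ), (j+1 : ℕ)) ∈ block i j \ {(c1, c2)} := by
      simp only [block, Finset.mem_sdiff, Finset.mem_insert, Finset.mem_singleton, Prod.mk.injEq, and_true, true_and, or_true, true_or]
      omega
    have hbd2 := hsub hb2
    simp only [rect, Finset.mem_product, Finset.mem_range] at hbd2
    refine ⟨j, (⟨i, by omega⟩, 0), by omega, ?_⟩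
    ext ⟨a, b⟩
    simp [dec, lc, rc, block, Prod.ext_iff, Fin.ext_iff, Fin.exists_iff]
    omega

/-! ### Sequences of placement sets and the bijection with tilings -/

def stQ (q : ℕ → Finset Pl) : ℕ → Finset (Fin 4)
  | 0 => ∅
  | j + 1 => rz (q j)

def ValidQ (n : ℕ) (q : ℕ → Finset Pl) : Prop :=
  (∀ j, n - 1 ≤ j → q j = ∅) ∧
  (∀ j < n - 1, q j ∈ steps (stQ q j)) ∧
  stQ q (n - 1) = Finset.univ

def FFQ (n : ℕ) (q : ℕ → Finset Pl) : Prop :=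
  ∀ i : Fin 3, ∃ j < n - 1, ∃ p ∈ q j, p.1 = i

def Phi (n : ℕ) (q : ℕ → Finset Pl) : Finset (Finset (ℕ × ℕ)) :=
  (Finset.range (n - 1)).biUnion (fun j => (q j).image (dec j))

lemma mem_Phi {n : ℕ} {q : ℕ → Finset Pl} {T : Finset (ℕ × ℕ)} :
    T ∈ Phi n q ↔ ∃ j < n - 1, ∃ p ∈ q j, dec j p = T := by
  simp [Phi]

lemma dec_disjoint_same {j : ℕ} {p p' : Pl} (h1 : Disjoint (lc p) (lc p'))
    (h2 : Disjoint (rc p) (rc p')) : Disjoint (dec j p) (dec j p') := by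
  rw [Finset.disjoint_left]
  rintro ⟨a, b⟩ hc hc'
  rcases mem_dec.1 hc with ⟨hb, r, hr, hra⟩ | ⟨hb, r, hr, hra⟩ <;>
    rcases mem_dec.1 hc' with ⟨hb', r', hr', hra'⟩ | ⟨hb', r', hr', hra'⟩ <;> try omega
  · have hrr : r = r' := Fin.val_injective (by omega)
    subst hrr
    exact Finset.disjoint_left.1 h1 hr hr'
  · have hrr : r = r' := Fin.val_injective (by omega)
    subst hrr
    exact Finset.disjoint_left.1 h2 hr hr'

lemma dec_disjoint_adj {j : ℕ} {p p' : Pl} (h : Disjoint (rc p) (lc p')) :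
    Disjoint (dec j p) (dec (j + 1) p') := by
  rw [Finset.disjoint_left]
  rintro ⟨a, b⟩ hc hc'
  rcases mem_dec.1 hc with ⟨hb, r, hr, hra⟩ | ⟨hb, r, hr, hra⟩ <;>
    rcases mem_dec.1 hc' with ⟨hb', r', hr', hra'⟩ | ⟨hb', r', hr', hra'⟩ <;> try omega
  have hrr : r = r' := Fin.val_injective (by omega)
  subst hrr
  exact Finset.disjoint_left.1 h hr hr'

lemma dec_disjoint_far {j j' : ℕ} {p p' : Pl} (h : j + 2 ≤ j') :
    Disjoint (dec j p) (dec j' p') := by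
  rw [Finset.disjoint_left]
  rintro ⟨a, b⟩ hc hc'
  rcases mem_dec.1 hc with ⟨rfl, -⟩ | ⟨hb, -⟩ <;>
    rcases mem_dec.1 hc' with ⟨hb', -⟩ | ⟨hb', -⟩ <;> omega

lemma disjoint_of_dec_disjoint {j : ℕ} {p p' : Pl} (h : Disjoint (dec j p) (dec j p')) :
    Disjoint (lc p) (lc p') ∧ Disjoint (rc p) (rc p') := by
  constructor
  · rw [Finset.disjoint_left]
    intro r hr hr'
    exact Finset.disjoint_left.1 h (dec_left_mem.2 hr) (dec_left_mem.2 hr')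
  · rw [Finset.disjoint_left]
    intro r hr hr'
    exact Finset.disjoint_left.1 h (dec_right_mem.2 hr) (dec_right_mem.2 hr')

lemma validQ_disjoint_aux {n : ℕ} {q : ℕ → Finset Pl} (hv : ValidQ n q)
    {j j' : ℕ} {p p' : Pl} (hjj : j ≤ j') (hj : j < n - 1) (hj' : j' < n - 1)
    (hp : p ∈ q j) (hp' : p' ∈ q j') (hne : dec j p ≠ dec j' p') :
    Disjoint (dec j p) (dec j' p') := by
  rcases Nat.lt_or_ge j' (j + 2) with hlt | hge
  · have : j = j' ∨ j' = j + 1 := by omega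
    rcases this with rfl | rfl
    · -- same column
      have hPD : PD (q j) := ((mem_steps _ _).1 (hv.2.1 j hj)).2.1
      have hpp : p ≠ p' := fun hh => hne (hh ▸ rfl)
      obtain ⟨a, b⟩ := hPD p hp p' hp' hpp
      exact dec_disjoint_same a b
    · -- adjacent columns
      apply dec_disjoint_adj
      have hstep : q (j + 1) ∈ steps (stQ q (j + 1)) := hv.2.1 (j + 1) hj'
      have hlz : lz (q (j + 1)) = (stQ q (j + 1))ᶜ := ((mem_steps _ _).1 hstep).2.2
      have h1 : rc p ⊆ rz (q j) := subset_rz hp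
      have h2 : lc p' ⊆ (rz (q j))ᶜ := by
        have := subset_lz hp'
        rw [hlz] at this
        exact this
      rw [Finset.disjoint_left]
      intro r hr hr'
      have := h2 hr'
      simp only [Finset.mem_compl] at this
      exact this (h1 hr)
  · exact dec_disjoint_far hge

theorem validQ_tiling {n : ℕ} {q : ℕ → Finset Pl} (hn : 2 ≤ n) (hv : ValidQ n q) :
    IsTrominoTiling 4 n (Phi n q) := by
  refine ⟨?_, ?_, ?_⟩
  · intro T hT
    obtain ⟨j, -, p, -, rfl⟩ := mem_Phi.1 hT
    exact dec_isLTromino j p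
  · intro T₁ hT₁ T₂ hT₂ hne
    obtain ⟨j, hj, p, hp, rfl⟩ := mem_Phi.1 hT₁
    obtain ⟨j', hj', p', hp', rfl⟩ := mem_Phi.1 hT₂
    rcases Nat.le_total j j' with h | h
    · exact validQ_disjoint_aux hv h hj hj' hp hp' hne
    · exact (validQ_disjoint_aux hv h hj' hj hp' hp (Ne.symm hne)).symm
  · apply Finset.Subset.antisymm
    · intro c hc
      obtain ⟨T, hT, hcT⟩ := Finset.mem_sup.1 hc
      obtain ⟨j, hj, p, -, rfl⟩ := mem_Phi.1 hT
      exact dec_subset_rect p (by omega) hcT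
    · rintro ⟨a, b⟩ hab
      simp only [rect, Finset.mem_product, Finset.mem_range] at hab
      obtain ⟨ha, hb⟩ := hab
      set A : Fin 4 := ⟨a, ha⟩ with hA
      have hAa : (A : ℕ) = a := rfl
      apply Finset.mem_sup.2
      rcases Nat.lt_or_ge b (n - 1) with hbn | hbn
      · have hstep : q b ∈ steps (stQ q b) := hv.2.1 b hbn
        have hlz : lz (q b) = (stQ q b)ᶜ := ((mem_steps _ _).1 hstep).2.2
        by_cases hAm : A ∈ stQ q b
        · cases b with
          | zero => simp [stQ] at hAm
          | succ m =>
            obtain ⟨p, hp, hrp⟩ := mem_rz.1 hAm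
            exact ⟨dec m p, mem_Phi.2 ⟨m, by omega, p, hp, rfl⟩, hAa ▸ dec_right_mem.2 hrp⟩
        · have : A ∈ lz (q b) := by rw [hlz]; exact Finset.mem_compl.2 hAm
          obtain ⟨p, hp, hrp⟩ := mem_lz.1 this
          exact ⟨dec b p, mem_Phi.2 ⟨b, hbn, p, hp, rfl⟩, hAa ▸ dec_left_mem.2 hrp⟩
      · have hbeq : b = n - 1 := by omega
        obtain ⟨m, hm⟩ : ∃ m, n - 1 = m + 1 := ⟨n - 2, by omega⟩
        have hAm : A ∈ stQ q (n - 1) := hv.2.2 ▸ Finset.mem_univ A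
        rw [hm] at hAm
        obtain ⟨p, hp, hrp⟩ := mem_rz.1 (hAm : A ∈ rz (q m))
        refine ⟨dec m p, mem_Phi.2 ⟨m, by omega, p, hp, rfl⟩, ?_⟩
        have : ((A : ℕ), m + 1) ∈ dec m p := dec_right_mem.2 hrp
        rwa [hAa, ← hm, ← hbeq] at this

theorem validQ_faultfree {n : ℕ} {q : ℕ → Finset Pl} (hn : 2 ≤ n) (hv : ValidQ n q)
    (hf : FFQ n q) : IsFaultfree 4 n (Phi n q) := by
  constructor
  · intro i h0 h4
    obtain ⟨j, hj, p, hp, hp1⟩ := hf ⟨i - 1, by omega⟩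
    refine ⟨dec j p, mem_Phi.2 ⟨j, hj, p, hp, rfl⟩, crossesH_dec.2 ?_⟩
    have : (p.1 : ℕ) = i - 1 := by rw [hp1]
    omega
  · intro m h0 hm
    have hj : m - 1 < n - 1 := by omega
    have hne : q (m - 1) ≠ ∅ := ((mem_steps _ _).1 (hv.2.1 (m - 1) hj)).1
    obtain ⟨p, hp⟩ := Finset.nonempty_iff_ne_empty.2 hne
    exact ⟨dec (m - 1) p, mem_Phi.2 ⟨m - 1, hj, p, hp, rfl⟩, crossesV_dec.2 (by omega)⟩

lemma mem_q_iff_mem_Phi {n : ℕ} {q : ℕ → Finset Pl} {j : ℕ} (hj : j < n - 1) (p : Pl) :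
    p ∈ q j ↔ dec j p ∈ Phi n q := by
  constructor
  · intro hp; exact mem_Phi.2 ⟨j, hj, p, hp, rfl⟩
  · intro hp
    obtain ⟨j', _, p', hp', he⟩ := mem_Phi.1 hp
    obtain ⟨rfl, rfl⟩ := dec_inj he
    exact hp'

theorem phi_injOn {n : ℕ} {q q' : ℕ → Finset Pl} (hv : ValidQ n q) (hv' : ValidQ n q')
    (he : Phi n q = Phi n q') : q = q' := by
  funext j
  rcases Nat.lt_or_ge j (n - 1) with hj | hj
  · ext p
    rw [mem_q_iff_mem_Phi hj, mem_q_iff_mem_Phi hj, he]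
  · rw [hv.1 j hj, hv'.1 j hj]

theorem tiling_surj {n : ℕ} {𝒯 : Finset (Finset (ℕ × ℕ))} (hn : 2 ≤ n)
    (ht : IsTrominoTiling 4 n 𝒯) (hf : IsFaultfree 4 n 𝒯) :
    ∃ q, ValidQ n q ∧ FFQ n q ∧ Phi n q = 𝒯 := by
  obtain ⟨h1, h2, h3⟩ := ht
  set q : ℕ → Finset Pl := fun j => Finset.univ.filter (fun p => dec j p ∈ 𝒯) with hq
  have hqmem : ∀ j p, p ∈ q j ↔ dec j p ∈ 𝒯 := by
    intro j p; simp [hq]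
  have hTsub : ∀ T ∈ 𝒯, T ⊆ rect 4 n := by
    intro T hT
    have := Finset.le_sup (f := id) hT
    rw [h3] at this
    exact this
  have hdecT : ∀ T ∈ 𝒯, ∃ j p, j ≤ n - 2 ∧ T = dec j p := by
    intro T hT
    obtain ⟨j, p, hj, rfl⟩ := tromino_eq_dec (h1 T hT) (hTsub T hT)
    exact ⟨j, p, by omega, rfl⟩
  have huniq : ∀ T ∈ 𝒯, ∀ T' ∈ 𝒯, ∀ c, c ∈ T → c ∈ T' → T = T' := by
    intro T hT T' hT' c hc hc'
    by_contra hne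
    exact Finset.disjoint_left.1 (h2 T hT T' hT' hne) hc hc'
  have hcov : ∀ c ∈ rect 4 n, ∃ T ∈ 𝒯, c ∈ T := by
    intro c hc
    rw [← h3] at hc
    obtain ⟨T, hT, hcT⟩ := Finset.mem_sup.1 hc
    exact ⟨T, hT, hcT⟩
  have hc3 : ∀ j, n - 1 ≤ j → q j = ∅ := by
    intro j hj
    rw [Finset.eq_empty_iff_forall_notMem]
    intro p hp
    obtain ⟨r, hr⟩ := rc_nonempty p
    have hcell : ((r : ℕ), j + 1) ∈ dec j p := dec_right_mem.2 hr
    have := hTsub _ ((hqmem j p).1 hp) hcell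
    simp only [rect, Finset.mem_product, Finset.mem_range] at this
    omega
  -- stQ q j characterization: A ∈ stQ q j ↔ cell (A, j) covered from the left
  have hst : ∀ j, 0 < j → j ≤ n - 1 → ∀ A : Fin 4,
      A ∈ stQ q j ↔ ∃ p, p ∈ q (j - 1) ∧ A ∈ rc p := by
    intro j hj0 hjn A
    obtain ⟨m, rfl⟩ : ∃ m, j = m + 1 := ⟨j - 1, by omega⟩
    simp only [stQ, Nat.add_sub_cancel]
    exact ⟨fun h => mem_rz.1 h, fun ⟨p, hp, hr⟩ => mem_rz.2 ⟨p, hp, hr⟩⟩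
  -- key coverage argument
  have hkey : ∀ j ≤ n - 1, ∀ A : Fin 4, (∃ p ∈ q j, A ∈ lc p) ∨ A ∈ stQ q j := by
    intro j hj A
    have hcell : ((A : ℕ), j) ∈ rect 4 n := by
      simp only [rect, Finset.mem_product, Finset.mem_range]
      exact ⟨A.isLt, by omega⟩
    obtain ⟨T, hT, hcT⟩ := hcov _ hcell
    obtain ⟨j', p', hj', rfl⟩ := hdecT T hT
    have hp' : p' ∈ q j' := (hqmem j' p').2 hT
    rcases mem_dec.1 hcT with ⟨hbj, r, hr, hra⟩ | ⟨hbj, r, hr, hra⟩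
    · left
      refine ⟨p', hbj ▸ hp', ?_⟩
      rwa [← Fin.val_injective (hra : (r : ℕ) = (A : ℕ))]
    · right
      rw [hst j (by omega) hj A]
      refine ⟨p', ?_, ?_⟩
      · have : j - 1 = j' := by omega
        rwa [this]
      · rwa [← Fin.val_injective (hra : (r : ℕ) = (A : ℕ))]
  have hnotboth : ∀ j ≤ n - 1, ∀ A : Fin 4, (∃ p ∈ q j, A ∈ lc p) → A ∈ stQ q j → False := by
    intro j hj A ⟨p, hp, hlp⟩ hstm
    have hj0 : 0 < j := by
      cases j with
      | zero => simp [stQ] at hstm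
      | succ m => omega
    obtain ⟨p', hp', hr'⟩ := (hst j hj0 hj A).1 hstm
    have hT1 : dec j p ∈ 𝒯 := (hqmem j p).1 hp
    have hT2 : dec (j - 1) p' ∈ 𝒯 := (hqmem (j - 1) p').1 hp'
    have hcell1 : ((A : ℕ), j) ∈ dec j p := dec_left_mem.2 hlp
    have hcell2 : ((A : ℕ), j) ∈ dec (j - 1) p' := by
      have : ((A : ℕ), (j - 1) + 1) ∈ dec (j - 1) p' := dec_right_mem.2 hr'
      rwa [show j - 1 + 1 = j by omega] at this
    have := huniq _ hT1 _ hT2 _ hcell1 hcell2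
    have := (dec_inj this).1
    omega
  have hval : ValidQ n q := by
    refine ⟨hc3, ?_, ?_⟩
    · intro j hj
      rw [mem_steps]
      refine ⟨?_, ?_, ?_⟩
      · -- nonempty from vertical faultfreeness
        have hcross := hf.2 (j + 1) (by omega) (by omega)
        obtain ⟨T, hT, hcr⟩ := hcross
        obtain ⟨j', p', hj', rfl⟩ := hdecT T hT
        have : j + 1 = j' + 1 := crossesV_dec.1 hcr
        intro hempty
        have hp' : p' ∈ q j' := (hqmem j' p').2 hT
        rw [show j' = j by omega, hempty] at hp'
        simp at hp'
      · -- PD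
        intro p hp p'' hp'' hne
        have hT1 : dec j p ∈ 𝒯 := (hqmem j p).1 hp
        have hT2 : dec j p'' ∈ 𝒯 := (hqmem j p'').1 hp''
        have hTne : dec j p ≠ dec j p'' := fun hh => hne (dec_inj hh).2
        exact disjoint_of_dec_disjoint (h2 _ hT1 _ hT2 hTne)
      · -- exact cover
        ext A
        simp only [Finset.mem_compl]
        constructor
        · intro hA
          obtain ⟨p, hp, hlp⟩ := mem_lz.1 hA
          exact fun hstm => hnotboth j (by omega) A ⟨p, hp, hlp⟩ hstm
        · intro hA
          rcases hkey j (by omega) A with ⟨p, hp, hlp⟩ | hstm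
          · exact mem_lz.2 ⟨p, hp, hlp⟩
          · exact absurd hstm hA
    · -- final state is univ
      ext A
      simp only [Finset.mem_univ, iff_true]
      rcases hkey (n - 1) le_rfl A with ⟨p, hp, -⟩ | hstm
      · exact absurd hp (by rw [hc3 (n - 1) le_rfl]; simp)
      · exact hstm
  refine ⟨q, hval, ?_, ?_⟩
  · -- FFQ from horizontal faultfreeness
    intro i
    obtain ⟨T, hT, hcr⟩ := hf.1 ((i : ℕ) + 1) (by omega) (by omega)
    obtain ⟨j, p, hj, rfl⟩ := hdecT T hT
    refine ⟨j, by omega, p, (hqmem j p).2 hT, ?_⟩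
    have : (i : ℕ) + 1 = (p.1 : ℕ) + 1 := crossesH_dec.1 hcr
    exact Fin.val_injective (by omega)
  · -- Phi q = 𝒯
    ext T
    rw [mem_Phi]
    constructor
    · rintro ⟨j, hj, p, hp, rfl⟩
      exact (hqmem j p).1 hp
    · intro hT
      obtain ⟨j, p, hj, rfl⟩ := hdecT T hT
      exact ⟨j, by omega, p, (hqmem j p).2 hT, rfl⟩

/-! ### Paths as lists, and counting -/

def paths : ℕ → Finset (Fin 4) → Finset (List (Finset Pl))
  | 0, S => if S = Finset.univ then {[]} else ∅
  | k + 1, S => (steps S).biUnion (fun P => (paths k (rz P)).image (fun L => P :: L))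

def Chain : Finset (Fin 4) → List (Finset Pl) → Prop
  | S, [] => S = Finset.univ
  | S, P :: L => P ∈ steps S ∧ Chain (rz P) L

lemma mem_paths : ∀ (k : ℕ) (S : Finset (Fin 4)) (L : List (Finset Pl)),
    L ∈ paths k S ↔ L.length = k ∧ Chain S L := by
  intro k
  induction k with
  | zero =>
    intro S L
    by_cases hS : S = Finset.univ <;> cases L <;> simp [paths, hS, Chain]
  | succ k ih =>
    intro S L
    cases L with
    | nil => simp [paths, Chain]
    | cons P L =>
      simp only [paths, Finset.mem_biUnion, Finset.mem_image, List.cons.injEq]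
      constructor
      · rintro ⟨P', hP', L', hL', rfl, rfl⟩
        obtain ⟨h1, h2⟩ := (ih _ _).1 hL'
        exact ⟨by simp [h1], hP', h2⟩
      · rintro ⟨hlen, hP, hch⟩
        refine ⟨P, hP, L, (ih _ _).2 ⟨by simpa using hlen, hch⟩, rfl, rfl⟩

def psi (L : List (Finset Pl)) : ℕ → Finset Pl := fun j => L.getD j ∅

def stF (S : Finset (Fin 4)) (L : List (Finset Pl)) : ℕ → Finset (Fin 4)
  | 0 => S
  | j + 1 => rz (L.getD j ∅)

lemma stF_cons (S : Finset (Fin 4)) (P : Finset Pl) (L : List (Finset Pl)) (m : ℕ) :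
    stF S (P :: L) (m + 1) = stF (rz P) L m := by
  cases m <;> rfl

lemma chain_iff : ∀ (L : List (Finset Pl)) (S : Finset (Fin 4)),
    Chain S L ↔ ((∀ j < L.length, L.getD j ∅ ∈ steps (stF S L j)) ∧
      stF S L L.length = Finset.univ) := by
  intro L
  induction L with
  | nil =>
    intro S
    simp [Chain, stF]
  | cons P L ih =>
    intro S
    simp only [Chain, List.length_cons]
    rw [ih (rz P)]
    constructor
    · rintro ⟨hP, h1, h2⟩
      refine ⟨?_, ?_⟩
      · intro j hj
        cases j with
        | zero => exact hP
        | succ m =>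
          rw [stF_cons, List.getD_cons_succ]
          exact h1 m (by omega)
      · rw [stF_cons]; exact h2
    · rintro ⟨h1, h2⟩
      refine ⟨h1 0 (by omega), ?_, ?_⟩
      · intro j hj
        have := h1 (j + 1) (by omega)
        rwa [stF_cons, List.getD_cons_succ] at this
      · rw [← stF_cons S P]; exact h2

lemma stQ_psi (L : List (Finset Pl)) (j : ℕ) : stQ (psi L) j = stF ∅ L j := by
  cases j <;> rfl

/-- offsets used in a path -/
def offs : List (Finset Pl) → Finset (Fin 3)
  | [] => ∅
  | P :: L => P.image Prod.fst ∪ offs L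

lemma mem_offs {i : Fin 3} : ∀ {L : List (Finset Pl)},
    i ∈ offs L ↔ ∃ P ∈ L, ∃ p ∈ P, p.1 = i := by
  intro L
  induction L with
  | nil => simp [offs]
  | cons P L ih =>
    simp only [offs, Finset.mem_union, Finset.mem_image, List.mem_cons, ih]
    constructor
    · rintro (⟨p, hp, rfl⟩ | ⟨Q, hQ, hex⟩)
      · exact ⟨P, Or.inl rfl, p, hp, rfl⟩
      · exact ⟨Q, Or.inr hQ, hex⟩
    · rintro ⟨Q, hQ | hQ, p, hp, rfl⟩
      · exact Or.inl ⟨p, hQ ▸ hp, rfl⟩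
      · exact Or.inr ⟨Q, hQ, p, hp, rfl⟩

lemma mem_list_iff_getD {L : List (Finset Pl)} {P : Finset Pl} :
    P ∈ L ↔ ∃ j < L.length, L.getD j ∅ = P := by
  constructor
  · intro h
    obtain ⟨j, hj, rfl⟩ := List.mem_iff_getElem.1 h
    exact ⟨j, hj, List.getD_eq_getElem L ∅ hj⟩
  · rintro ⟨j, hj, rfl⟩
    rw [List.getD_eq_getElem L ∅ hj]
    exact List.getElem_mem hj

def answerF (n : ℕ) : Finset (List (Finset Pl)) :=
  (paths (n - 1) ∅).filter (fun L => ∀ i : Fin 3, i ∈ offs L)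

lemma psi_valid {n : ℕ} (hn : 2 ≤ n) {L : List (Finset Pl)} (hL : L ∈ answerF n) :
    ValidQ n (psi L) ∧ FFQ n (psi L) := by
  obtain ⟨hpath, hoffs⟩ := Finset.mem_filter.1 hL
  obtain ⟨hlen, hch⟩ := (mem_paths _ _ _).1 hpath
  obtain ⟨h1, h2⟩ := (chain_iff L ∅).1 hch
  refine ⟨⟨?_, ?_, ?_⟩, ?_⟩
  · intro j hj
    exact List.getD_eq_default _ _ (by omega)
  · intro j hj
    rw [stQ_psi]
    exact h1 j (by omega)
  · rw [stQ_psi, ← hlen]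
    exact h2
  · intro i
    obtain ⟨P, hP, p, hp, hpi⟩ := mem_offs.1 (hoffs i)
    obtain ⟨j, hj, rfl⟩ := mem_list_iff_getD.1 hP
    exact ⟨j, by omega, p, hp, hpi⟩

lemma psi_surj {n : ℕ} (hn : 2 ≤ n) {q : ℕ → Finset Pl} (hv : ValidQ n q) (hff : FFQ n q) :
    ∃ L ∈ answerF n, psi L = q := by
  set L : List (Finset Pl) := List.ofFn (fun i : Fin (n - 1) => q i) with hLdef
  have hlen : L.length = n - 1 := by simp [hLdef]
  have hpsi : psi L = q := by
    funext j
    rcases Nat.lt_or_ge j (n - 1) with hj | hj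
    · have hj' : j < L.length := by omega
      rw [psi, List.getD_eq_getElem L ∅ hj']
      simp [hLdef]
    · rw [psi, List.getD_eq_default _ _ (by omega), hv.1 j hj]
  refine ⟨L, Finset.mem_filter.2 ⟨(mem_paths _ _ _).2 ⟨hlen, ?_⟩, ?_⟩, hpsi⟩
  · rw [chain_iff]
    constructor
    · intro j hj
      have := hv.2.1 j (by omega)
      rwa [← hpsi, psi, stQ_psi] at this
    · have := hv.2.2
      rw [← hpsi, stQ_psi] at this
      rw [hlen]
      exact this
  · intro i
    obtain ⟨j, hj, p, hp, hpi⟩ := hff i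
    refine mem_offs.2 ⟨L.getD j ∅, mem_list_iff_getD.2 ⟨j, by omega, rfl⟩, p, ?_, hpi⟩
    rw [show L.getD j ∅ = psi L j from rfl, hpsi]
    exact hp

lemma psi_injOn {n : ℕ} {L L' : List (Finset Pl)} (h : L ∈ answerF n) (h' : L' ∈ answerF n)
    (he : psi L = psi L') : L = L' := by
  have hlen : L.length = n - 1 := ((mem_paths _ _ _).1 (Finset.mem_filter.1 h).1).1
  have hlen' : L'.length = n - 1 := ((mem_paths _ _ _).1 (Finset.mem_filter.1 h').1).1
  apply List.ext_get (by omega)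
  intro i hi hi'
  have := congrFun he i
  rwa [psi, psi, List.getD_eq_getElem L ∅ hi, List.getD_eq_getElem L' ∅ hi'] at this

/-! ### The transfer recursion -/

def mcount : ℕ → Finset (Fin 4) → Finset (Fin 3) → ℕ
  | 0, S, M => if S = Finset.univ ∧ M = ∅ then 1 else 0
  | k + 1, S, M => ∑ P ∈ steps S, mcount k (rz P) (M \ P.image Prod.fst)

lemma card_paths_filter : ∀ (k : ℕ) (S : Finset (Fin 4)) (M : Finset (Fin 3)),
    ((paths k S).filter (fun L => M ⊆ offs L)).card = mcount k S M := by
  intro k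
  induction k with
  | zero =>
    intro S M
    by_cases hS : S = Finset.univ
    · by_cases hM : M = ∅ <;>
        simp [paths, mcount, hS, hM, offs, Finset.subset_empty, Finset.filter_singleton]
    · simp [paths, mcount, hS]
  | succ k ih =>
    intro S M
    show ((Finset.biUnion _ _).filter _).card = _
    rw [Finset.filter_biUnion]
    rw [Finset.card_biUnion]
    · apply Finset.sum_congr rfl
      intro P hP
      rw [Finset.filter_image]
      rw [Finset.card_image_of_injective _ (List.cons_injective)]
      have hcong : Finset.filter (fun a => M ⊆ offs (P :: a)) (paths k (rz P)) =
          Finset.filter (fun L => M \ P.image Prod.fst ⊆ offs L) (paths k (rz P)) := by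
        apply Finset.filter_congr
        intro L _
        show M ⊆ P.image Prod.fst ∪ offs L ↔ _
        constructor
        · intro h x hx
          obtain ⟨h1, h2⟩ := Finset.mem_sdiff.1 hx
          rcases Finset.mem_union.1 (h h1) with h' | h'
          · exact absurd h' h2
          · exact h'
        · intro h x hx
          by_cases hx' : x ∈ P.image Prod.fst
          · exact Finset.mem_union_left _ hx'
          · exact Finset.mem_union_right _ (h (Finset.mem_sdiff.2 ⟨hx, hx'⟩))
      rw [hcong, ih]
    · intro P hP Q hQ hPQ
      apply Finset.disjoint_left.2
      intro L hL hL'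
      simp only [Finset.mem_filter, Finset.mem_image] at hL hL'
      obtain ⟨⟨L1, -, rfl⟩, -⟩ := hL
      obtain ⟨⟨L2, -, he⟩, -⟩ := hL'
      have := (List.cons.injEq _ _ _ _).mp he
      exact hPQ this.1.symm

lemma answerF_card (n : ℕ) : (answerF n).card = mcount (n - 1) ∅ Finset.univ := by
  rw [← card_paths_filter]
  congr 1
  apply Finset.filter_congr
  intro L _
  constructor
  · intro h; intro i _; exact h i
  · intro h i; exact h (Finset.mem_univ i)

def e0 (S : Finset (Fin 4)) (M : Finset (Fin 3)) : ℕ :=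
  if S = ({0,1,2,3} : Finset (Fin 4)) ∧ M = (∅ : Finset (Fin 3)) then 1 else 0
def e1 (S : Finset (Fin 4)) (M : Finset (Fin 3)) : ℕ :=
  if S = ({0,2} : Finset (Fin 4)) ∧ M = (∅ : Finset (Fin 3)) then 1 else
  if S = ({0,2} : Finset (Fin 4)) ∧ M = ({0} : Finset (Fin 3)) then 1 else
  if S = ({0,2} : Finset (Fin 4)) ∧ M = ({2} : Finset (Fin 3)) then 1 else
  if S = ({0,2} : Finset (Fin 4)) ∧ M = ({0,2} : Finset (Fin 3)) then 1 else
  if S = ({0,3} : Finset (Fin 4)) ∧ M = (∅ : Finset (Fin 3)) then 1 else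
  if S = ({0,3} : Finset (Fin 4)) ∧ M = ({0} : Finset (Fin 3)) then 1 else
  if S = ({0,3} : Finset (Fin 4)) ∧ M = ({2} : Finset (Fin 3)) then 1 else
  if S = ({0,3} : Finset (Fin 4)) ∧ M = ({0,2} : Finset (Fin 3)) then 1 else
  if S = ({1,2} : Finset (Fin 4)) ∧ M = (∅ : Finset (Fin 3)) then 1 else
  if S = ({1,2} : Finset (Fin 4)) ∧ M = ({0} : Finset (Fin 3)) then 1 else
  if S = ({1,2} : Finset (Fin 4)) ∧ M = ({2} : Finset (Fin 3)) then 1 else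
  if S = ({1,2} : Finset (Fin 4)) ∧ M = ({0,2} : Finset (Fin 3)) then 1 else
  if S = ({1,3} : Finset (Fin 4)) ∧ M = (∅ : Finset (Fin 3)) then 1 else
  if S = ({1,3} : Finset (Fin 4)) ∧ M = ({0} : Finset (Fin 3)) then 1 else
  if S = ({1,3} : Finset (Fin 4)) ∧ M = ({2} : Finset (Fin 3)) then 1 else
  if S = ({1,3} : Finset (Fin 4)) ∧ M = ({0,2} : Finset (Fin 3)) then 1 else 0
def e2 (S : Finset (Fin 4)) (M : Finset (Fin 3)) : ℕ :=
  if S = (∅ : Finset (Fin 4)) ∧ M = (∅ : Finset (Fin 3)) then 4 else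
  if S = (∅ : Finset (Fin 4)) ∧ M = ({0} : Finset (Fin 3)) then 4 else
  if S = (∅ : Finset (Fin 4)) ∧ M = ({2} : Finset (Fin 3)) then 4 else
  if S = (∅ : Finset (Fin 4)) ∧ M = ({0,2} : Finset (Fin 3)) then 4 else
  if S = ({0,1,3} : Finset (Fin 4)) ∧ M = (∅ : Finset (Fin 3)) then 1 else
  if S = ({0,1,3} : Finset (Fin 4)) ∧ M = ({0} : Finset (Fin 3)) then 1 else
  if S = ({0,1,3} : Finset (Fin 4)) ∧ M = ({1} : Finset (Fin 3)) then 1 else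
  if S = ({0,1,3} : Finset (Fin 4)) ∧ M = ({2} : Finset (Fin 3)) then 1 else
  if S = ({0,1,3} : Finset (Fin 4)) ∧ M = ({0,1} : Finset (Fin 3)) then 1 else
  if S = ({0,1,3} : Finset (Fin 4)) ∧ M = ({0,2} : Finset (Fin 3)) then 1 else
  if S = ({0,1,3} : Finset (Fin 4)) ∧ M = ({1,2} : Finset (Fin 3)) then 1 else
  if S = ({0,1,3} : Finset (Fin 4)) ∧ M = ({0,1,2} : Finset (Fin 3)) then 1 else
  if S = ({0,2,3} : Finset (Fin 4)) ∧ M = (∅ : Finset (Fin 3)) then 1 else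
  if S = ({0,2,3} : Finset (Fin 4)) ∧ M = ({0} : Finset (Fin 3)) then 1 else
  if S = ({0,2,3} : Finset (Fin 4)) ∧ M = ({1} : Finset (Fin 3)) then 1 else
  if S = ({0,2,3} : Finset (Fin 4)) ∧ M = ({2} : Finset (Fin 3)) then 1 else
  if S = ({0,2,3} : Finset (Fin 4)) ∧ M = ({0,1} : Finset (Fin 3)) then 1 else
  if S = ({0,2,3} : Finset (Fin 4)) ∧ M = ({0,2} : Finset (Fin 3)) then 1 else
  if S = ({0,2,3} : Finset (Fin 4)) ∧ M = ({1,2} : Finset (Fin 3)) then 1 else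
  if S = ({0,2,3} : Finset (Fin 4)) ∧ M = ({0,1,2} : Finset (Fin 3)) then 1 else 0
def e3 (S : Finset (Fin 4)) (M : Finset (Fin 3)) : ℕ :=
  if S = ({0} : Finset (Fin 4)) ∧ M = (∅ : Finset (Fin 3)) then 1 else
  if S = ({0} : Finset (Fin 4)) ∧ M = ({0} : Finset (Fin 3)) then 1 else
  if S = ({0} : Finset (Fin 4)) ∧ M = ({1} : Finset (Fin 3)) then 1 else
  if S = ({0} : Finset (Fin 4)) ∧ M = ({2} : Finset (Fin 3)) then 1 else
  if S = ({0} : Finset (Fin 4)) ∧ M = ({0,1} : Finset (Fin 3)) then 1 else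
  if S = ({0} : Finset (Fin 4)) ∧ M = ({0,2} : Finset (Fin 3)) then 1 else
  if S = ({0} : Finset (Fin 4)) ∧ M = ({1,2} : Finset (Fin 3)) then 1 else
  if S = ({0} : Finset (Fin 4)) ∧ M = ({0,1,2} : Finset (Fin 3)) then 1 else
  if S = ({1} : Finset (Fin 4)) ∧ M = (∅ : Finset (Fin 3)) then 1 else
  if S = ({1} : Finset (Fin 4)) ∧ M = ({0} : Finset (Fin 3)) then 1 else
  if S = ({1} : Finset (Fin 4)) ∧ M = ({1} : Finset (Fin 3)) then 1 else
  if S = ({1} : Finset (Fin 4)) ∧ M = ({2} : Finset (Fin 3)) then 1 else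
  if S = ({1} : Finset (Fin 4)) ∧ M = ({0,1} : Finset (Fin 3)) then 1 else
  if S = ({1} : Finset (Fin 4)) ∧ M = ({0,2} : Finset (Fin 3)) then 1 else
  if S = ({1} : Finset (Fin 4)) ∧ M = ({1,2} : Finset (Fin 3)) then 1 else
  if S = ({1} : Finset (Fin 4)) ∧ M = ({0,1,2} : Finset (Fin 3)) then 1 else
  if S = ({2} : Finset (Fin 4)) ∧ M = (∅ : Finset (Fin 3)) then 1 else
  if S = ({2} : Finset (Fin 4)) ∧ M = ({0} : Finset (Fin 3)) then 1 else
  if S = ({2} : Finset (Fin 4)) ∧ M = ({1} : Finset (Fin 3)) then 1 else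
  if S = ({2} : Finset (Fin 4)) ∧ M = ({2} : Finset (Fin 3)) then 1 else
  if S = ({2} : Finset (Fin 4)) ∧ M = ({0,1} : Finset (Fin 3)) then 1 else
  if S = ({2} : Finset (Fin 4)) ∧ M = ({0,2} : Finset (Fin 3)) then 1 else
  if S = ({2} : Finset (Fin 4)) ∧ M = ({1,2} : Finset (Fin 3)) then 1 else
  if S = ({2} : Finset (Fin 4)) ∧ M = ({0,1,2} : Finset (Fin 3)) then 1 else
  if S = ({3} : Finset (Fin 4)) ∧ M = (∅ : Finset (Fin 3)) then 1 else
  if S = ({3} : Finset (Fin 4)) ∧ M = ({0} : Finset (Fin 3)) then 1 else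
  if S = ({3} : Finset (Fin 4)) ∧ M = ({1} : Finset (Fin 3)) then 1 else
  if S = ({3} : Finset (Fin 4)) ∧ M = ({2} : Finset (Fin 3)) then 1 else
  if S = ({3} : Finset (Fin 4)) ∧ M = ({0,1} : Finset (Fin 3)) then 1 else
  if S = ({3} : Finset (Fin 4)) ∧ M = ({0,2} : Finset (Fin 3)) then 1 else
  if S = ({3} : Finset (Fin 4)) ∧ M = ({1,2} : Finset (Fin 3)) then 1 else
  if S = ({3} : Finset (Fin 4)) ∧ M = ({0,1,2} : Finset (Fin 3)) then 1 else 0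
def e4 (S : Finset (Fin 4)) (M : Finset (Fin 3)) : ℕ :=
  if S = ({0,1} : Finset (Fin 4)) ∧ M = (∅ : Finset (Fin 3)) then 2 else
  if S = ({0,1} : Finset (Fin 4)) ∧ M = ({0} : Finset (Fin 3)) then 2 else
  if S = ({0,1} : Finset (Fin 4)) ∧ M = ({1} : Finset (Fin 3)) then 2 else
  if S = ({0,1} : Finset (Fin 4)) ∧ M = ({2} : Finset (Fin 3)) then 2 else
  if S = ({0,1} : Finset (Fin 4)) ∧ M = ({0,1} : Finset (Fin 3)) then 2 else
  if S = ({0,1} : Finset (Fin 4)) ∧ M = ({0,2} : Finset (Fin 3)) then 2 else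
  if S = ({0,1} : Finset (Fin 4)) ∧ M = ({1,2} : Finset (Fin 3)) then 2 else
  if S = ({0,1} : Finset (Fin 4)) ∧ M = ({0,1,2} : Finset (Fin 3)) then 2 else
  if S = ({0,3} : Finset (Fin 4)) ∧ M = (∅ : Finset (Fin 3)) then 2 else
  if S = ({0,3} : Finset (Fin 4)) ∧ M = ({0} : Finset (Fin 3)) then 2 else
  if S = ({0,3} : Finset (Fin 4)) ∧ M = ({1} : Finset (Fin 3)) then 2 else
  if S = ({0,3} : Finset (Fin 4)) ∧ M = ({2} : Finset (Fin 3)) then 2 else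
  if S = ({0,3} : Finset (Fin 4)) ∧ M = ({0,1} : Finset (Fin 3)) then 2 else
  if S = ({0,3} : Finset (Fin 4)) ∧ M = ({0,2} : Finset (Fin 3)) then 2 else
  if S = ({0,3} : Finset (Fin 4)) ∧ M = ({1,2} : Finset (Fin 3)) then 2 else
  if S = ({0,3} : Finset (Fin 4)) ∧ M = ({0,1,2} : Finset (Fin 3)) then 2 else
  if S = ({2,3} : Finset (Fin 4)) ∧ M = (∅ : Finset (Fin 3)) then 2 else
  if S = ({2,3} : Finset (Fin 4)) ∧ M = ({0} : Finset (Fin 3)) then 2 else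
  if S = ({2,3} : Finset (Fin 4)) ∧ M = ({1} : Finset (Fin 3)) then 2 else
  if S = ({2,3} : Finset (Fin 4)) ∧ M = ({2} : Finset (Fin 3)) then 2 else
  if S = ({2,3} : Finset (Fin 4)) ∧ M = ({0,1} : Finset (Fin 3)) then 2 else
  if S = ({2,3} : Finset (Fin 4)) ∧ M = ({0,2} : Finset (Fin 3)) then 2 else
  if S = ({2,3} : Finset (Fin 4)) ∧ M = ({1,2} : Finset (Fin 3)) then 2 else
  if S = ({2,3} : Finset (Fin 4)) ∧ M = ({0,1,2} : Finset (Fin 3)) then 2 else 0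
def e5 (S : Finset (Fin 4)) (M : Finset (Fin 3)) : ℕ :=
  if S = (∅ : Finset (Fin 4)) ∧ M = (∅ : Finset (Fin 3)) then 2 else
  if S = (∅ : Finset (Fin 4)) ∧ M = ({0} : Finset (Fin 3)) then 2 else
  if S = (∅ : Finset (Fin 4)) ∧ M = ({1} : Finset (Fin 3)) then 2 else
  if S = (∅ : Finset (Fin 4)) ∧ M = ({2} : Finset (Fin 3)) then 2 else
  if S = (∅ : Finset (Fin 4)) ∧ M = ({0,1} : Finset (Fin 3)) then 2 else
  if S = (∅ : Finset (Fin 4)) ∧ M = ({0,2} : Finset (Fin 3)) then 2 else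
  if S = (∅ : Finset (Fin 4)) ∧ M = ({1,2} : Finset (Fin 3)) then 2 else
  if S = (∅ : Finset (Fin 4)) ∧ M = ({0,1,2} : Finset (Fin 3)) then 2 else
  if S = ({0,1,2} : Finset (Fin 4)) ∧ M = (∅ : Finset (Fin 3)) then 2 else
  if S = ({0,1,2} : Finset (Fin 4)) ∧ M = ({0} : Finset (Fin 3)) then 2 else
  if S = ({0,1,2} : Finset (Fin 4)) ∧ M = ({1} : Finset (Fin 3)) then 2 else
  if S = ({0,1,2} : Finset (Fin 4)) ∧ M = ({2} : Finset (Fin 3)) then 2 else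
  if S = ({0,1,2} : Finset (Fin 4)) ∧ M = ({0,1} : Finset (Fin 3)) then 2 else
  if S = ({0,1,2} : Finset (Fin 4)) ∧ M = ({0,2} : Finset (Fin 3)) then 2 else
  if S = ({0,1,2} : Finset (Fin 4)) ∧ M = ({1,2} : Finset (Fin 3)) then 2 else
  if S = ({0,1,2} : Finset (Fin 4)) ∧ M = ({0,1,2} : Finset (Fin 3)) then 2 else
  if S = ({0,1,3} : Finset (Fin 4)) ∧ M = (∅ : Finset (Fin 3)) then 2 else
  if S = ({0,1,3} : Finset (Fin 4)) ∧ M = ({0} : Finset (Fin 3)) then 2 else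
  if S = ({0,1,3} : Finset (Fin 4)) ∧ M = ({1} : Finset (Fin 3)) then 2 else
  if S = ({0,1,3} : Finset (Fin 4)) ∧ M = ({2} : Finset (Fin 3)) then 2 else
  if S = ({0,1,3} : Finset (Fin 4)) ∧ M = ({0,1} : Finset (Fin 3)) then 2 else
  if S = ({0,1,3} : Finset (Fin 4)) ∧ M = ({0,2} : Finset (Fin 3)) then 2 else
  if S = ({0,1,3} : Finset (Fin 4)) ∧ M = ({1,2} : Finset (Fin 3)) then 2 else
  if S = ({0,1,3} : Finset (Fin 4)) ∧ M = ({0,1,2} : Finset (Fin 3)) then 2 else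
  if S = ({0,2,3} : Finset (Fin 4)) ∧ M = (∅ : Finset (Fin 3)) then 2 else
  if S = ({0,2,3} : Finset (Fin 4)) ∧ M = ({0} : Finset (Fin 3)) then 2 else
  if S = ({0,2,3} : Finset (Fin 4)) ∧ M = ({1} : Finset (Fin 3)) then 2 else
  if S = ({0,2,3} : Finset (Fin 4)) ∧ M = ({2} : Finset (Fin 3)) then 2 else
  if S = ({0,2,3} : Finset (Fin 4)) ∧ M = ({0,1} : Finset (Fin 3)) then 2 else
  if S = ({0,2,3} : Finset (Fin 4)) ∧ M = ({0,2} : Finset (Fin 3)) then 2 else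
  if S = ({0,2,3} : Finset (Fin 4)) ∧ M = ({1,2} : Finset (Fin 3)) then 2 else
  if S = ({0,2,3} : Finset (Fin 4)) ∧ M = ({0,1,2} : Finset (Fin 3)) then 2 else
  if S = ({1,2,3} : Finset (Fin 4)) ∧ M = (∅ : Finset (Fin 3)) then 2 else
  if S = ({1,2,3} : Finset (Fin 4)) ∧ M = ({0} : Finset (Fin 3)) then 2 else
  if S = ({1,2,3} : Finset (Fin 4)) ∧ M = ({1} : Finset (Fin 3)) then 2 else
  if S = ({1,2,3} : Finset (Fin 4)) ∧ M = ({2} : Finset (Fin 3)) then 2 else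
  if S = ({1,2,3} : Finset (Fin 4)) ∧ M = ({0,1} : Finset (Fin 3)) then 2 else
  if S = ({1,2,3} : Finset (Fin 4)) ∧ M = ({0,2} : Finset (Fin 3)) then 2 else
  if S = ({1,2,3} : Finset (Fin 4)) ∧ M = ({1,2} : Finset (Fin 3)) then 2 else
  if S = ({1,2,3} : Finset (Fin 4)) ∧ M = ({0,1,2} : Finset (Fin 3)) then 2 else 0
def e6 (S : Finset (Fin 4)) (M : Finset (Fin 3)) : ℕ :=
  if S = ({0} : Finset (Fin 4)) ∧ M = (∅ : Finset (Fin 3)) then 8 else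
  if S = ({0} : Finset (Fin 4)) ∧ M = ({0} : Finset (Fin 3)) then 8 else
  if S = ({0} : Finset (Fin 4)) ∧ M = ({1} : Finset (Fin 3)) then 8 else
  if S = ({0} : Finset (Fin 4)) ∧ M = ({2} : Finset (Fin 3)) then 8 else
  if S = ({0} : Finset (Fin 4)) ∧ M = ({0,1} : Finset (Fin 3)) then 8 else
  if S = ({0} : Finset (Fin 4)) ∧ M = ({0,2} : Finset (Fin 3)) then 8 else
  if S = ({0} : Finset (Fin 4)) ∧ M = ({1,2} : Finset (Fin 3)) then 8 else
  if S = ({0} : Finset (Fin 4)) ∧ M = ({0,1,2} : Finset (Fin 3)) then 8 else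
  if S = ({1} : Finset (Fin 4)) ∧ M = (∅ : Finset (Fin 3)) then 4 else
  if S = ({1} : Finset (Fin 4)) ∧ M = ({0} : Finset (Fin 3)) then 4 else
  if S = ({1} : Finset (Fin 4)) ∧ M = ({1} : Finset (Fin 3)) then 4 else
  if S = ({1} : Finset (Fin 4)) ∧ M = ({2} : Finset (Fin 3)) then 4 else
  if S = ({1} : Finset (Fin 4)) ∧ M = ({0,1} : Finset (Fin 3)) then 4 else
  if S = ({1} : Finset (Fin 4)) ∧ M = ({0,2} : Finset (Fin 3)) then 4 else
  if S = ({1} : Finset (Fin 4)) ∧ M = ({1,2} : Finset (Fin 3)) then 4 else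
  if S = ({1} : Finset (Fin 4)) ∧ M = ({0,1,2} : Finset (Fin 3)) then 4 else
  if S = ({2} : Finset (Fin 4)) ∧ M = (∅ : Finset (Fin 3)) then 4 else
  if S = ({2} : Finset (Fin 4)) ∧ M = ({0} : Finset (Fin 3)) then 4 else
  if S = ({2} : Finset (Fin 4)) ∧ M = ({1} : Finset (Fin 3)) then 4 else
  if S = ({2} : Finset (Fin 4)) ∧ M = ({2} : Finset (Fin 3)) then 4 else
  if S = ({2} : Finset (Fin 4)) ∧ M = ({0,1} : Finset (Fin 3)) then 4 else
  if S = ({2} : Finset (Fin 4)) ∧ M = ({0,2} : Finset (Fin 3)) then 4 else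
  if S = ({2} : Finset (Fin 4)) ∧ M = ({1,2} : Finset (Fin 3)) then 4 else
  if S = ({2} : Finset (Fin 4)) ∧ M = ({0,1,2} : Finset (Fin 3)) then 4 else
  if S = ({3} : Finset (Fin 4)) ∧ M = (∅ : Finset (Fin 3)) then 8 else
  if S = ({3} : Finset (Fin 4)) ∧ M = ({0} : Finset (Fin 3)) then 8 else
  if S = ({3} : Finset (Fin 4)) ∧ M = ({1} : Finset (Fin 3)) then 8 else
  if S = ({3} : Finset (Fin 4)) ∧ M = ({2} : Finset (Fin 3)) then 8 else
  if S = ({3} : Finset (Fin 4)) ∧ M = ({0,1} : Finset (Fin 3)) then 8 else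
  if S = ({3} : Finset (Fin 4)) ∧ M = ({0,2} : Finset (Fin 3)) then 8 else
  if S = ({3} : Finset (Fin 4)) ∧ M = ({1,2} : Finset (Fin 3)) then 8 else
  if S = ({3} : Finset (Fin 4)) ∧ M = ({0,1,2} : Finset (Fin 3)) then 8 else 0
def e7 (S : Finset (Fin 4)) (M : Finset (Fin 3)) : ℕ :=
  if S = ({0,1} : Finset (Fin 4)) ∧ M = (∅ : Finset (Fin 3)) then 12 else
  if S = ({0,1} : Finset (Fin 4)) ∧ M = ({0} : Finset (Fin 3)) then 12 else
  if S = ({0,1} : Finset (Fin 4)) ∧ M = ({1} : Finset (Fin 3)) then 12 else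
  if S = ({0,1} : Finset (Fin 4)) ∧ M = ({2} : Finset (Fin 3)) then 12 else
  if S = ({0,1} : Finset (Fin 4)) ∧ M = ({0,1} : Finset (Fin 3)) then 12 else
  if S = ({0,1} : Finset (Fin 4)) ∧ M = ({0,2} : Finset (Fin 3)) then 12 else
  if S = ({0,1} : Finset (Fin 4)) ∧ M = ({1,2} : Finset (Fin 3)) then 12 else
  if S = ({0,1} : Finset (Fin 4)) ∧ M = ({0,1,2} : Finset (Fin 3)) then 12 else
  if S = ({0,3} : Finset (Fin 4)) ∧ M = (∅ : Finset (Fin 3)) then 8 else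
  if S = ({0,3} : Finset (Fin 4)) ∧ M = ({0} : Finset (Fin 3)) then 8 else
  if S = ({0,3} : Finset (Fin 4)) ∧ M = ({1} : Finset (Fin 3)) then 8 else
  if S = ({0,3} : Finset (Fin 4)) ∧ M = ({2} : Finset (Fin 3)) then 8 else
  if S = ({0,3} : Finset (Fin 4)) ∧ M = ({0,1} : Finset (Fin 3)) then 8 else
  if S = ({0,3} : Finset (Fin 4)) ∧ M = ({0,2} : Finset (Fin 3)) then 8 else
  if S = ({0,3} : Finset (Fin 4)) ∧ M = ({1,2} : Finset (Fin 3)) then 8 else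
  if S = ({0,3} : Finset (Fin 4)) ∧ M = ({0,1,2} : Finset (Fin 3)) then 8 else
  if S = ({2,3} : Finset (Fin 4)) ∧ M = (∅ : Finset (Fin 3)) then 12 else
  if S = ({2,3} : Finset (Fin 4)) ∧ M = ({0} : Finset (Fin 3)) then 12 else
  if S = ({2,3} : Finset (Fin 4)) ∧ M = ({1} : Finset (Fin 3)) then 12 else
  if S = ({2,3} : Finset (Fin 4)) ∧ M = ({2} : Finset (Fin 3)) then 12 else
  if S = ({2,3} : Finset (Fin 4)) ∧ M = ({0,1} : Finset (Fin 3)) then 12 else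
  if S = ({2,3} : Finset (Fin 4)) ∧ M = ({0,2} : Finset (Fin 3)) then 12 else
  if S = ({2,3} : Finset (Fin 4)) ∧ M = ({1,2} : Finset (Fin 3)) then 12 else
  if S = ({2,3} : Finset (Fin 4)) ∧ M = ({0,1,2} : Finset (Fin 3)) then 12 else 0
def e8 (S : Finset (Fin 4)) (M : Finset (Fin 3)) : ℕ :=
  if S = (∅ : Finset (Fin 4)) ∧ M = (∅ : Finset (Fin 3)) then 8 else
  if S = (∅ : Finset (Fin 4)) ∧ M = ({0} : Finset (Fin 3)) then 8 else
  if S = (∅ : Finset (Fin 4)) ∧ M = ({1} : Finset (Fin 3)) then 8 else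
  if S = (∅ : Finset (Fin 4)) ∧ M = ({2} : Finset (Fin 3)) then 8 else
  if S = (∅ : Finset (Fin 4)) ∧ M = ({0,1} : Finset (Fin 3)) then 8 else
  if S = (∅ : Finset (Fin 4)) ∧ M = ({0,2} : Finset (Fin 3)) then 8 else
  if S = (∅ : Finset (Fin 4)) ∧ M = ({1,2} : Finset (Fin 3)) then 8 else
  if S = (∅ : Finset (Fin 4)) ∧ M = ({0,1,2} : Finset (Fin 3)) then 8 else
  if S = ({0,1,2} : Finset (Fin 4)) ∧ M = (∅ : Finset (Fin 3)) then 12 else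
  if S = ({0,1,2} : Finset (Fin 4)) ∧ M = ({0} : Finset (Fin 3)) then 12 else
  if S = ({0,1,2} : Finset (Fin 4)) ∧ M = ({1} : Finset (Fin 3)) then 12 else
  if S = ({0,1,2} : Finset (Fin 4)) ∧ M = ({2} : Finset (Fin 3)) then 12 else
  if S = ({0,1,2} : Finset (Fin 4)) ∧ M = ({0,1} : Finset (Fin 3)) then 12 else
  if S = ({0,1,2} : Finset (Fin 4)) ∧ M = ({0,2} : Finset (Fin 3)) then 12 else
  if S = ({0,1,2} : Finset (Fin 4)) ∧ M = ({1,2} : Finset (Fin 3)) then 12 else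
  if S = ({0,1,2} : Finset (Fin 4)) ∧ M = ({0,1,2} : Finset (Fin 3)) then 12 else
  if S = ({0,1,3} : Finset (Fin 4)) ∧ M = (∅ : Finset (Fin 3)) then 12 else
  if S = ({0,1,3} : Finset (Fin 4)) ∧ M = ({0} : Finset (Fin 3)) then 12 else
  if S = ({0,1,3} : Finset (Fin 4)) ∧ M = ({1} : Finset (Fin 3)) then 12 else
  if S = ({0,1,3} : Finset (Fin 4)) ∧ M = ({2} : Finset (Fin 3)) then 12 else
  if S = ({0,1,3} : Finset (Fin 4)) ∧ M = ({0,1} : Finset (Fin 3)) then 12 else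
  if S = ({0,1,3} : Finset (Fin 4)) ∧ M = ({0,2} : Finset (Fin 3)) then 12 else
  if S = ({0,1,3} : Finset (Fin 4)) ∧ M = ({1,2} : Finset (Fin 3)) then 12 else
  if S = ({0,1,3} : Finset (Fin 4)) ∧ M = ({0,1,2} : Finset (Fin 3)) then 12 else
  if S = ({0,2,3} : Finset (Fin 4)) ∧ M = (∅ : Finset (Fin 3)) then 12 else
  if S = ({0,2,3} : Finset (Fin 4)) ∧ M = ({0} : Finset (Fin 3)) then 12 else
  if S = ({0,2,3} : Finset (Fin 4)) ∧ M = ({1} : Finset (Fin 3)) then 12 else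
  if S = ({0,2,3} : Finset (Fin 4)) ∧ M = ({2} : Finset (Fin 3)) then 12 else
  if S = ({0,2,3} : Finset (Fin 4)) ∧ M = ({0,1} : Finset (Fin 3)) then 12 else
  if S = ({0,2,3} : Finset (Fin 4)) ∧ M = ({0,2} : Finset (Fin 3)) then 12 else
  if S = ({0,2,3} : Finset (Fin 4)) ∧ M = ({1,2} : Finset (Fin 3)) then 12 else
  if S = ({0,2,3} : Finset (Fin 4)) ∧ M = ({0,1,2} : Finset (Fin 3)) then 12 else
  if S = ({1,2,3} : Finset (Fin 4)) ∧ M = (∅ : Finset (Fin 3)) then 12 else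
  if S = ({1,2,3} : Finset (Fin 4)) ∧ M = ({0} : Finset (Fin 3)) then 12 else
  if S = ({1,2,3} : Finset (Fin 4)) ∧ M = ({1} : Finset (Fin 3)) then 12 else
  if S = ({1,2,3} : Finset (Fin 4)) ∧ M = ({2} : Finset (Fin 3)) then 12 else
  if S = ({1,2,3} : Finset (Fin 4)) ∧ M = ({0,1} : Finset (Fin 3)) then 12 else
  if S = ({1,2,3} : Finset (Fin 4)) ∧ M = ({0,2} : Finset (Fin 3)) then 12 else
  if S = ({1,2,3} : Finset (Fin 4)) ∧ M = ({1,2} : Finset (Fin 3)) then 12 else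
  if S = ({1,2,3} : Finset (Fin 4)) ∧ M = ({0,1,2} : Finset (Fin 3)) then 12 else 0
def e9 (S : Finset (Fin 4)) (M : Finset (Fin 3)) : ℕ :=
  if S = ({0} : Finset (Fin 4)) ∧ M = (∅ : Finset (Fin 3)) then 48 else
  if S = ({0} : Finset (Fin 4)) ∧ M = ({0} : Finset (Fin 3)) then 48 else
  if S = ({0} : Finset (Fin 4)) ∧ M = ({1} : Finset (Fin 3)) then 48 else
  if S = ({0} : Finset (Fin 4)) ∧ M = ({2} : Finset (Fin 3)) then 48 else
  if S = ({0} : Finset (Fin 4)) ∧ M = ({0,1} : Finset (Fin 3)) then 48 else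
  if S = ({0} : Finset (Fin 4)) ∧ M = ({0,2} : Finset (Fin 3)) then 48 else
  if S = ({0} : Finset (Fin 4)) ∧ M = ({1,2} : Finset (Fin 3)) then 48 else
  if S = ({0} : Finset (Fin 4)) ∧ M = ({0,1,2} : Finset (Fin 3)) then 48 else
  if S = ({1} : Finset (Fin 4)) ∧ M = (∅ : Finset (Fin 3)) then 24 else
  if S = ({1} : Finset (Fin 4)) ∧ M = ({0} : Finset (Fin 3)) then 24 else
  if S = ({1} : Finset (Fin 4)) ∧ M = ({1} : Finset (Fin 3)) then 24 else
  if S = ({1} : Finset (Fin 4)) ∧ M = ({2} : Finset (Fin 3)) then 24 else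
  if S = ({1} : Finset (Fin 4)) ∧ M = ({0,1} : Finset (Fin 3)) then 24 else
  if S = ({1} : Finset (Fin 4)) ∧ M = ({0,2} : Finset (Fin 3)) then 24 else
  if S = ({1} : Finset (Fin 4)) ∧ M = ({1,2} : Finset (Fin 3)) then 24 else
  if S = ({1} : Finset (Fin 4)) ∧ M = ({0,1,2} : Finset (Fin 3)) then 24 else
  if S = ({2} : Finset (Fin 4)) ∧ M = (∅ : Finset (Fin 3)) then 24 else
  if S = ({2} : Finset (Fin 4)) ∧ M = ({0} : Finset (Fin 3)) then 24 else
  if S = ({2} : Finset (Fin 4)) ∧ M = ({1} : Finset (Fin 3)) then 24 else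
  if S = ({2} : Finset (Fin 4)) ∧ M = ({2} : Finset (Fin 3)) then 24 else
  if S = ({2} : Finset (Fin 4)) ∧ M = ({0,1} : Finset (Fin 3)) then 24 else
  if S = ({2} : Finset (Fin 4)) ∧ M = ({0,2} : Finset (Fin 3)) then 24 else
  if S = ({2} : Finset (Fin 4)) ∧ M = ({1,2} : Finset (Fin 3)) then 24 else
  if S = ({2} : Finset (Fin 4)) ∧ M = ({0,1,2} : Finset (Fin 3)) then 24 else
  if S = ({3} : Finset (Fin 4)) ∧ M = (∅ : Finset (Fin 3)) then 48 else
  if S = ({3} : Finset (Fin 4)) ∧ M = ({0} : Finset (Fin 3)) then 48 else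
  if S = ({3} : Finset (Fin 4)) ∧ M = ({1} : Finset (Fin 3)) then 48 else
  if S = ({3} : Finset (Fin 4)) ∧ M = ({2} : Finset (Fin 3)) then 48 else
  if S = ({3} : Finset (Fin 4)) ∧ M = ({0,1} : Finset (Fin 3)) then 48 else
  if S = ({3} : Finset (Fin 4)) ∧ M = ({0,2} : Finset (Fin 3)) then 48 else
  if S = ({3} : Finset (Fin 4)) ∧ M = ({1,2} : Finset (Fin 3)) then 48 else
  if S = ({3} : Finset (Fin 4)) ∧ M = ({0,1,2} : Finset (Fin 3)) then 48 else 0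

lemma mcount_succ (k : ℕ) (S : Finset (Fin 4)) (M : Finset (Fin 3)) :
    mcount (k + 1) S M = ∑ P ∈ steps S, mcount k (rz P) (M \ P.image Prod.fst) := rfl

lemma L0 : ∀ S M, mcount 0 S M = e0 S M := by decide

lemma L1 : ∀ S M, mcount 1 S M = e1 S M := by
  have h : ∀ S M, mcount 1 S M = ∑ P ∈ steps S, e0 (rz P) (M \ P.image Prod.fst) := by
    intro S M
    have e : mcount 1 S M = mcount (0 + 1) S M := rfl
    rw [e, mcount_succ]
    exact Finset.sum_congr rfl (fun P _ => L0 _ _)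
  intro S M
  rw [h]
  revert S M
  decide

lemma L2 : ∀ S M, mcount 2 S M = e2 S M := by
  have h : ∀ S M, mcount 2 S M = ∑ P ∈ steps S, e1 (rz P) (M \ P.image Prod.fst) := by
    intro S M
    have e : mcount 2 S M = mcount (1 + 1) S M := rfl
    rw [e, mcount_succ]
    exact Finset.sum_congr rfl (fun P _ => L1 _ _)
  intro S M
  rw [h]
  revert S M
  decide

lemma L3 : ∀ S M, mcount 3 S M = e3 S M := by
  have h : ∀ S M, mcount 3 S M = ∑ P ∈ steps S, e2 (rz P) (M \ P.image Prod.fst) := by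
    intro S M
    have e : mcount 3 S M = mcount (2 + 1) S M := rfl
    rw [e, mcount_succ]
    exact Finset.sum_congr rfl (fun P _ => L2 _ _)
  intro S M
  rw [h]
  revert S M
  decide

lemma L4 : ∀ S M, mcount 4 S M = e4 S M := by
  have h : ∀ S M, mcount 4 S M = ∑ P ∈ steps S, e3 (rz P) (M \ P.image Prod.fst) := by
    intro S M
    have e : mcount 4 S M = mcount (3 + 1) S M := rfl
    rw [e, mcount_succ]
    exact Finset.sum_congr rfl (fun P _ => L3 _ _)
  intro S M
  rw [h]
  revert S M
  decide

lemma L5 : ∀ S M, mcount 5 S M = e5 S M := by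
  have h : ∀ S M, mcount 5 S M = ∑ P ∈ steps S, e4 (rz P) (M \ P.image Prod.fst) := by
    intro S M
    have e : mcount 5 S M = mcount (4 + 1) S M := rfl
    rw [e, mcount_succ]
    exact Finset.sum_congr rfl (fun P _ => L4 _ _)
  intro S M
  rw [h]
  revert S M
  decide

lemma L6 : ∀ S M, mcount 6 S M = e6 S M := by
  have h : ∀ S M, mcount 6 S M = ∑ P ∈ steps S, e5 (rz P) (M \ P.image Prod.fst) := by
    intro S M
    have e : mcount 6 S M = mcount (5 + 1) S M := rfl
    rw [e, mcount_succ]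
    exact Finset.sum_congr rfl (fun P _ => L5 _ _)
  intro S M
  rw [h]
  revert S M
  decide

lemma L7 : ∀ S M, mcount 7 S M = e7 S M := by
  have h : ∀ S M, mcount 7 S M = ∑ P ∈ steps S, e6 (rz P) (M \ P.image Prod.fst) := by
    intro S M
    have e : mcount 7 S M = mcount (6 + 1) S M := rfl
    rw [e, mcount_succ]
    exact Finset.sum_congr rfl (fun P _ => L6 _ _)
  intro S M
  rw [h]
  revert S M
  decide

lemma L8 : ∀ S M, mcount 8 S M = e8 S M := by
  have h : ∀ S M, mcount 8 S M = ∑ P ∈ steps S, e7 (rz P) (M \ P.image Prod.fst) := by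
    intro S M
    have e : mcount 8 S M = mcount (7 + 1) S M := rfl
    rw [e, mcount_succ]
    exact Finset.sum_congr rfl (fun P _ => L7 _ _)
  intro S M
  rw [h]
  revert S M
  decide

lemma L9 : ∀ S M, mcount 9 S M = e9 S M := by
  have h : ∀ S M, mcount 9 S M = ∑ P ∈ steps S, e8 (rz P) (M \ P.image Prod.fst) := by
    intro S M
    have e : mcount 9 S M = mcount (8 + 1) S M := rfl
    rw [e, mcount_succ]
    exact Finset.sum_congr rfl (fun P _ => L8 _ _)
  intro S M
  rw [h]
  revert S M
  decide


lemma e9_eq_6_e6 : ∀ S M, e9 S M = 6 * e6 S M := by decide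

lemma eigen : ∀ k, 6 ≤ k → ∀ S M, mcount (k + 3) S M = 6 * mcount k S M := by
  intro k hk
  induction k, hk using Nat.le_induction with
  | base =>
    intro S M
    rw [show (6 + 3 : ℕ) = 9 from rfl, L9, L6, e9_eq_6_e6]
  | succ k hk ih =>
    intro S M
    have h1 : mcount (k + 1 + 3) S M = ∑ P ∈ steps S, mcount (k + 3) (rz P) (M \ P.image Prod.fst) := by
      have e : mcount (k + 1 + 3) S M = mcount ((k + 3) + 1) S M := rfl
      rw [e, mcount_succ]
    rw [h1, mcount_succ, Finset.mul_sum]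
    exact Finset.sum_congr rfl (fun P _ => ih _ _)

lemma mc_final : ∀ m, mcount (8 + 3 * m) ∅ Finset.univ = 8 * 6 ^ m := by
  intro m
  induction m with
  | zero =>
    rw [show (8 + 3 * 0 : ℕ) = 8 from rfl, L8]
    decide
  | succ m ih =>
    have e : (8 + 3 * (m + 1) : ℕ) = (8 + 3 * m) + 3 := by omega
    rw [e, eigen _ (by omega), ih]
    ring

end FFP

/-- for t ≥ 3, R(4,3t) has exactly 8·6^(t−3) faultfree tromino tilings. -/
theorem faultfree_count_4_3t (t : ℕ) (ht : 3 ≤ t) :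
    Set.ncard {𝒯 : Finset (Finset (ℕ × ℕ)) |
      IsTrominoTiling 4 (3 * t) 𝒯 ∧ IsFaultfree 4 (3 * t) 𝒯} = 8 * 6 ^ (t - 3) := by
  open FFP in
  have hn : 2 ≤ 3 * t := by omega
  have h1 : {𝒯 : Finset (Finset (ℕ × ℕ)) |
      IsTrominoTiling 4 (3 * t) 𝒯 ∧ IsFaultfree 4 (3 * t) 𝒯}
      = (Phi (3 * t)) '' {q | ValidQ (3 * t) q ∧ FFQ (3 * t) q} := by
    ext 𝒯
    constructor
    · rintro ⟨ht', hf⟩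
      obtain ⟨q, hv, hff, he⟩ := tiling_surj hn ht' hf
      exact ⟨q, ⟨hv, hff⟩, he⟩
    · rintro ⟨q, ⟨hv, hff⟩, rfl⟩
      exact ⟨validQ_tiling hn hv, validQ_faultfree hn hv hff⟩
  have h2 : {q | ValidQ (3 * t) q ∧ FFQ (3 * t) q} = psi '' ↑(answerF (3 * t)) := by
    ext q
    constructor
    · rintro ⟨hv, hff⟩
      obtain ⟨L, hL, he⟩ := psi_surj hn hv hff
      exact ⟨L, hL, he⟩
    · rintro ⟨L, hL, rfl⟩
      exact psi_valid hn (by simpa using hL)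
  have inj1 : Set.InjOn (Phi (3 * t)) {q | ValidQ (3 * t) q ∧ FFQ (3 * t) q} := by
    rintro q ⟨hv, -⟩ q' ⟨hv', -⟩ he
    exact phi_injOn hv hv' he
  have inj2 : Set.InjOn psi ↑(answerF (3 * t)) := by
    intro L hL L' hL' he
    exact psi_injOn (n := 3 * t) (by simpa using hL) (by simpa using hL') he
  calc Set.ncard {𝒯 : Finset (Finset (ℕ × ℕ)) |
      IsTrominoTiling 4 (3 * t) 𝒯 ∧ IsFaultfree 4 (3 * t) 𝒯}
      = Set.ncard ((Phi (3 * t)) '' {q | ValidQ (3 * t) q ∧ FFQ (3 * t) q}) := by rw [h1]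
    _ = Set.ncard {q | ValidQ (3 * t) q ∧ FFQ (3 * t) q} := Set.ncard_image_of_injOn inj1
    _ = Set.ncard (psi '' ↑(answerF (3 * t))) := by rw [h2]
    _ = Set.ncard (↑(answerF (3 * t)) : Set (List (Finset Pl))) := Set.ncard_image_of_injOn inj2
    _ = (answerF (3 * t)).card := Set.ncard_coe_finset _
    _ = mcount (3 * t - 1) ∅ Finset.univ := answerF_card (3 * t)
    _ = 8 * 6 ^ (t - 3) := by
        rw [show 3 * t - 1 = 8 + 3 * (t - 3) by omega, mc_final]
end

section
/- Let m, n be positive integers with 3 | mn. Then the number of tromino tilings of R(m,n) is at most 2^(mn/3) times the number of monodic tilings of R(m,n); this follows because each tromino tiling maps injectively to a directed monodic tiling (each L-tromino being replaced by a domino, carrying one of two possible directions, together with a monomino). -/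
/-- A domino: two horizontally or vertically adjacent cells. -/
def IsDomino (T : Finset (ℕ × ℕ)) : Prop :=
  ∃ i j, T = ({(i, j), (i, j + 1)} : Finset (ℕ × ℕ)) ∨
         T = ({(i, j), (i + 1, j)} : Finset (ℕ × ℕ))

/-- A monomino: a single cell. -/
def IsMonomino (T : Finset (ℕ × ℕ)) : Prop := ∃ c, T = {c}

/-- A domino tiling of R(m,n): a partition of the rectangle into dominoes. -/
def IsDominoTiling (m n : ℕ) (𝒯 : Finset (Finset (ℕ × ℕ))) : Prop :=
  (∀ T ∈ 𝒯, IsDomino T) ∧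
  (∀ T₁ ∈ 𝒯, ∀ T₂ ∈ 𝒯, T₁ ≠ T₂ → Disjoint T₁ T₂) ∧
  𝒯.sup id = rect m n

open Classical in
/-- A monodic tiling of R(m,n) (for 3 ∣ mn): a partition of the rectangle into
exactly mn/3 dominoes and mn/3 monominoes. -/
def IsMonodicTiling (m n : ℕ) (𝒯 : Finset (Finset (ℕ × ℕ))) : Prop :=
  (∀ T ∈ 𝒯, IsDomino T ∨ IsMonomino T) ∧
  (∀ T₁ ∈ 𝒯, ∀ T₂ ∈ 𝒯, T₁ ≠ T₂ → Disjoint T₁ T₂) ∧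
  𝒯.sup id = rect m n ∧
  (𝒯.filter fun T => IsDomino T).card = m * n / 3 ∧
  (𝒯.filter fun T => IsMonomino T).card = m * n / 3

/-!
Split each L-tromino into its horizontal domino and the remaining cell, and record one bit: whether
that cell lies in the left or in the right column of the domino. This turns a tromino tiling into a
monodic tiling together with a subset of its mn/3 dominoes, so it suffices that this assignment is
injective. Given the monodic tiling and the bits, the tromino through a domino in row a is known up
to whether its monomino lies in row a - 1 or in row a + 1. If two tilings chose differently, the
monomino in row a - 1 belongs, in the tiling that does not attach it to this domino, to a tromino
whose domino lies in row a - 2. By induction on the row, that tromino is common to both tilings,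
and then it meets the other tiling's tromino in that cell.
-/

theorem mem_powerset_powerset_of_sup_eq {α : Type*} [DecidableEq α] {R : Finset α}
    {𝒯 : Finset (Finset α)} (h : 𝒯.sup id = R) : 𝒯 ∈ R.powerset.powerset :=
  Finset.mem_powerset.mpr fun _ hT => Finset.mem_powerset.mpr (h ▸ Finset.le_sup (f := id) hT)

theorem ncard_setOf_eq_card_filter {α : Type*} [DecidableEq α] {R : Finset α}
    {P : Finset (Finset α) → Prop} [DecidablePred P] (h : ∀ 𝒯, P 𝒯 → 𝒯.sup id = R) :
    {𝒯 | P 𝒯}.ncard = (R.powerset.powerset.filter P).card := by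
  rw [← Set.ncard_coe_finset, Finset.coe_filter]
  congr
  ext 𝒯
  exact ⟨fun hP => ⟨mem_powerset_powerset_of_sup_eq (h 𝒯 hP), hP⟩, And.right⟩

namespace LTromino

def hDomino (a b : ℕ) : Finset (ℕ × ℕ) := {(a, b), (a, b + 1)}

def domino (T : Finset (ℕ × ℕ)) : Finset (ℕ × ℕ) :=
  T.filter fun p => ∃ q ∈ T, q.1 = p.1 ∧ (q.2 = p.2 + 1 ∨ q.2 + 1 = p.2)

def monomino (T : Finset (ℕ × ℕ)) : Finset (ℕ × ℕ) := T \ domino T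

def MonominoLeft (T : Finset (ℕ × ℕ)) : Prop :=
  ∀ p ∈ monomino T, ∀ q ∈ domino T, p.2 ≤ q.2

theorem domino_subset (T : Finset (ℕ × ℕ)) : domino T ⊆ T := Finset.filter_subset _ _

theorem monomino_subset (T : Finset (ℕ × ℕ)) : monomino T ⊆ T := Finset.sdiff_subset

theorem disjoint_domino_monomino (T : Finset (ℕ × ℕ)) : Disjoint (domino T) (monomino T) :=
  Finset.disjoint_sdiff

theorem domino_union_monomino (T : Finset (ℕ × ℕ)) : domino T ∪ monomino T = T :=
  Finset.union_sdiff_of_subset (domino_subset T)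

theorem mem_hDomino {a b x y : ℕ} : (x, y) ∈ hDomino a b ↔ x = a ∧ (y = b ∨ y = b + 1) := by
  simp only [hDomino, Finset.mem_insert, Finset.mem_singleton, Prod.mk.injEq]
  omega

theorem isDomino_hDomino (a b : ℕ) : IsDomino (hDomino a b) := ⟨a, b, Or.inl rfl⟩

variable {a b r c : ℕ}

theorem domino_insert_hDomino (h : r ≠ a) :
    domino (insert (r, c) (hDomino a b)) = hDomino a b := by
  ext ⟨x, y⟩
  simp [domino, hDomino]
  omega

theorem monomino_insert_hDomino (h : r ≠ a) :
    monomino (insert (r, c) (hDomino a b)) = {(r, c)} := by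
  rw [monomino, domino_insert_hDomino h]
  ext ⟨x, y⟩
  rw [Finset.mem_sdiff, Finset.mem_insert, mem_hDomino, Finset.mem_singleton, Prod.mk.injEq]
  omega

theorem monominoLeft_insert_hDomino_iff (h : r ≠ a) :
    MonominoLeft (insert (r, c) (hDomino a b)) ↔ c ≤ b := by
  rw [MonominoLeft, domino_insert_hDomino h, monomino_insert_hDomino h]
  simp only [hDomino, Finset.mem_singleton, Finset.mem_insert, forall_eq_or_imp, forall_eq]
  omega

theorem hDomino_inj {a' b' : ℕ} : hDomino a b = hDomino a' b' ↔ a = a' ∧ b = b' := by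
  constructor
  · intro h
    have h₁ := h ▸ mem_hDomino.2 ⟨rfl, Or.inl rfl⟩
    have h₂ := h ▸ mem_hDomino.2 ⟨rfl, Or.inr rfl⟩
    rw [mem_hDomino] at h₁ h₂
    omega
  · rintro ⟨rfl, rfl⟩; rfl

end LTromino

open LTromino

theorem IsDomino.card_eq {X : Finset (ℕ × ℕ)} (h : IsDomino X) : X.card = 2 := by
  obtain ⟨i, j, rfl | rfl⟩ := h <;> simp

theorem IsMonomino.card_eq {X : Finset (ℕ × ℕ)} (h : IsMonomino X) : X.card = 1 := by
  obtain ⟨x, rfl⟩ := h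
  rfl

namespace IsLTromino

variable {T : Finset (ℕ × ℕ)}

theorem exists_eq_insert_hDomino (h : IsLTromino T) :
    ∃ a b r c, (r + 1 = a ∨ r = a + 1) ∧ (c = b ∨ c = b + 1) ∧
      T = insert (r, c) (hDomino a b) := by
  obtain ⟨i, j, x, hx, rfl⟩ := h
  simp only [block, Finset.mem_insert, Finset.mem_singleton] at hx
  rcases hx with rfl | rfl | rfl | rfl
  · exact ⟨i + 1, j, i, j + 1, by omega, by omega, by ext ⟨x, y⟩; simp [block, hDomino]; omega⟩
  · exact ⟨i + 1, j, i, j, by omega, by omega, by ext ⟨x, y⟩; simp [block, hDomino]; omega⟩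
  · exact ⟨i, j, i + 1, j + 1, by omega, by omega, by ext ⟨x, y⟩; simp [block, hDomino]; omega⟩
  · exact ⟨i, j, i + 1, j, by omega, by omega, by ext ⟨x, y⟩; simp [block, hDomino]; omega⟩

theorem isDomino_domino (h : IsLTromino T) : IsDomino (domino T) := by
  obtain ⟨a, b, r, c, hr, -, rfl⟩ := h.exists_eq_insert_hDomino
  rw [domino_insert_hDomino (by omega)]
  exact isDomino_hDomino a b

theorem isMonomino_monomino (h : IsLTromino T) : IsMonomino (monomino T) := by
  obtain ⟨a, b, r, c, hr, -, rfl⟩ := h.exists_eq_insert_hDomino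
  exact ⟨(r, c), monomino_insert_hDomino (by omega)⟩

theorem card_domino (h : IsLTromino T) : (domino T).card = 2 := h.isDomino_domino.card_eq

theorem card_monomino (h : IsLTromino T) : (monomino T).card = 1 := h.isMonomino_monomino.card_eq

theorem card_eq (h : IsLTromino T) : T.card = 3 := by
  rw [← domino_union_monomino T, Finset.card_union_of_disjoint (disjoint_domino_monomino T),
    h.card_domino, h.card_monomino]

end IsLTromino

def IsTrominoPacking (A : Finset (Finset (ℕ × ℕ))) : Prop :=
  (∀ T ∈ A, IsLTromino T) ∧ (A : Set (Finset (ℕ × ℕ))).PairwiseDisjoint id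

theorem IsTrominoTiling.isTrominoPacking {m n : ℕ} {A : Finset (Finset (ℕ × ℕ))}
    (h : IsTrominoTiling m n A) : IsTrominoPacking A :=
  ⟨h.1, fun _ h₁ _ h₂ hne => h.2.1 _ h₁ _ h₂ hne⟩

def monodicOf (A : Finset (Finset (ℕ × ℕ))) : Finset (Finset (ℕ × ℕ)) :=
  A.biUnion fun T => {domino T, monomino T}

open Classical in
noncomputable def leftDominoes (A : Finset (Finset (ℕ × ℕ))) : Finset (Finset (ℕ × ℕ)) :=
  (A.filter MonominoLeft).image domino

theorem mem_monodicOf {A : Finset (Finset (ℕ × ℕ))} {X : Finset (ℕ × ℕ)} :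
    X ∈ monodicOf A ↔ ∃ T ∈ A, X = domino T ∨ X = monomino T := by
  simp [monodicOf]

theorem domino_mem_monodicOf {A : Finset (Finset (ℕ × ℕ))} {T : Finset (ℕ × ℕ)} (hT : T ∈ A) :
    domino T ∈ monodicOf A :=
  mem_monodicOf.mpr ⟨T, hT, Or.inl rfl⟩

theorem monomino_mem_monodicOf {A : Finset (Finset (ℕ × ℕ))} {T : Finset (ℕ × ℕ)} (hT : T ∈ A) :
    monomino T ∈ monodicOf A :=
  mem_monodicOf.mpr ⟨T, hT, Or.inr rfl⟩

theorem sup_monodicOf (A : Finset (Finset (ℕ × ℕ))) : (monodicOf A).sup id = A.sup id := by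
  rw [monodicOf, Finset.sup_biUnion]
  refine Finset.sup_congr rfl fun T _ => ?_
  simp [domino_union_monomino]

namespace IsTrominoPacking

variable {A B : Finset (Finset (ℕ × ℕ))} {T T' : Finset (ℕ × ℕ)}

theorem eq_of_mem_of_mem (hA : IsTrominoPacking A) (hT : T ∈ A) (hT' : T' ∈ A) {x : ℕ × ℕ}
    (hx : x ∈ T) (hx' : x ∈ T') : T = T' :=
  hA.2.elim_finset hT hT' x hx hx'

theorem domino_injOn (hA : IsTrominoPacking A) : Set.InjOn domino A := by
  intro T hT T' hT' h
  obtain ⟨x, hx⟩ := Finset.card_pos.mp (by rw [(hA.1 T hT).card_domino]; omega)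
  exact hA.eq_of_mem_of_mem hT hT' (domino_subset T hx) (domino_subset T' (h ▸ hx))

theorem monomino_injOn (hA : IsTrominoPacking A) : Set.InjOn monomino A := by
  intro T hT T' hT' h
  obtain ⟨x, hx⟩ := Finset.card_pos.mp (by rw [(hA.1 T hT).card_monomino]; omega)
  exact hA.eq_of_mem_of_mem hT hT' (monomino_subset T hx) (monomino_subset T' (h ▸ hx))

theorem card_sup (hA : IsTrominoPacking A) : (A.sup id).card = 3 * A.card := by
  rw [Finset.sup_eq_biUnion, Finset.card_biUnion hA.2,
    Finset.sum_congr rfl fun T hT => (hA.1 T hT).card_eq (T := id T), Finset.sum_const,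
    smul_eq_mul, mul_comm]

theorem exists_domino_eq (hA : IsTrominoPacking A) {X : Finset (ℕ × ℕ)}
    (hX : X ∈ monodicOf A) (h2 : X.card = 2) : ∃ T ∈ A, domino T = X := by
  obtain ⟨T, hT, rfl | rfl⟩ := mem_monodicOf.mp hX
  · exact ⟨T, hT, rfl⟩
  · rw [(hA.1 T hT).card_monomino] at h2
    omega

theorem exists_monomino_eq (hA : IsTrominoPacking A) {X : Finset (ℕ × ℕ)}
    (hX : X ∈ monodicOf A) (h1 : X.card = 1) : ∃ T ∈ A, monomino T = X := by
  obtain ⟨T, hT, rfl | rfl⟩ := mem_monodicOf.mp hX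
  · rw [(hA.1 T hT).card_domino] at h1
    omega
  · exact ⟨T, hT, rfl⟩

theorem filter_isDomino_monodicOf (hA : IsTrominoPacking A) [DecidablePred IsDomino] :
    (monodicOf A).filter IsDomino = A.image domino := by
  ext X
  simp only [Finset.mem_filter, Finset.mem_image, mem_monodicOf]
  constructor
  · rintro ⟨hX, hd⟩
    exact hA.exists_domino_eq (mem_monodicOf.mpr hX) hd.card_eq
  · rintro ⟨T, hT, rfl⟩
    exact ⟨⟨T, hT, Or.inl rfl⟩, (hA.1 T hT).isDomino_domino⟩

theorem filter_isMonomino_monodicOf (hA : IsTrominoPacking A) [DecidablePred IsMonomino] :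
    (monodicOf A).filter IsMonomino = A.image monomino := by
  ext X
  simp only [Finset.mem_filter, Finset.mem_image, mem_monodicOf]
  constructor
  · rintro ⟨hX, hm⟩
    exact hA.exists_monomino_eq (mem_monodicOf.mpr hX) hm.card_eq
  · rintro ⟨T, hT, rfl⟩
    exact ⟨⟨T, hT, Or.inr rfl⟩, (hA.1 T hT).isMonomino_monomino⟩

theorem pairwiseDisjoint_monodicOf (hA : IsTrominoPacking A) :
    (monodicOf A : Set (Finset (ℕ × ℕ))).PairwiseDisjoint id := by
  rw [monodicOf, Finset.coe_biUnion]
  refine Set.PairwiseDisjoint.biUnion_finset ?_ fun T _ => ?_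
  · intro T hT T' hT' hne
    simpa [Function.onFun, domino_union_monomino] using hA.2 hT hT' hne
  · rw [Finset.coe_pair]
    exact Set.pairwise_pair_of_symm.mpr fun _ => disjoint_domino_monomino T

theorem domino_mem_leftDominoes_iff (hA : IsTrominoPacking A) (hT : T ∈ A) :
    domino T ∈ leftDominoes A ↔ MonominoLeft T := by
  classical
  simp only [leftDominoes, Finset.mem_image, Finset.mem_filter]
  constructor
  · rintro ⟨T', ⟨hT', hl⟩, h⟩
    rwa [← hA.domino_injOn hT' hT h]
  · exact fun hl => ⟨T, ⟨hT, hl⟩, rfl⟩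

theorem leftDominoes_subset (hA : IsTrominoPacking A) [DecidablePred IsDomino] :
    leftDominoes A ⊆ (monodicOf A).filter IsDomino := by
  classical
  rw [hA.filter_isDomino_monodicOf]
  exact Finset.image_subset_image (Finset.filter_subset _ _)

theorem false_of_monomino_below_above (hA : IsTrominoPacking A) (hB : IsTrominoPacking B)
    (hM : monodicOf A = monodicOf B) {a b c r' c' : ℕ}
    (ih : ∀ a₂ < a, ∀ b₂, ∀ T₂ ∈ A, ∀ T₂' ∈ B,
      domino T₂ = hDomino a₂ b₂ → domino T₂' = hDomino a₂ b₂ → T₂ = T₂')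
    (hT : insert (a + 1, c) (hDomino a b) ∈ A) (hT' : insert (r', c') (hDomino a b) ∈ B)
    (hr' : r' + 1 = a) (hc' : c' = b ∨ c' = b + 1) : False := by
  have hm' : monomino (insert (r', c') (hDomino a b)) = {(r', c')} :=
    monomino_insert_hDomino (by omega)
  obtain ⟨T₂, hT₂, hm₂⟩ := hA.exists_monomino_eq (hM ▸ monomino_mem_monodicOf hT')
    (by rw [hm']; rfl)
  obtain ⟨a₂, b₂, r₂, c₂, hr₂, hc₂, rfl⟩ := (hA.1 T₂ hT₂).exists_eq_insert_hDomino
  rw [monomino_insert_hDomino (by omega), hm', Finset.singleton_inj, Prod.mk.injEq] at hm₂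
  obtain ⟨rfl, rfl⟩ := hm₂
  have ha₂ : a₂ ≠ a := by
    rintro rfl
    have hTT := hA.eq_of_mem_of_mem hT₂ hT (x := (a₂, c₂))
      (Finset.mem_insert_of_mem (mem_hDomino.2 ⟨rfl, hc₂⟩))
      (Finset.mem_insert_of_mem (mem_hDomino.2 ⟨rfl, hc'⟩))
    have hmem := hTT ▸ Finset.mem_insert_self (r₂, c₂) (hDomino a₂ b₂)
    rw [Finset.mem_insert, mem_hDomino, Prod.mk.injEq] at hmem
    omega
  obtain ⟨T₂', hT₂', hd₂⟩ := hB.exists_domino_eq (hM ▸ domino_mem_monodicOf hT₂)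
    (hA.1 _ hT₂).card_domino
  have hd : domino (insert (r₂, c₂) (hDomino a₂ b₂)) = hDomino a₂ b₂ :=
    domino_insert_hDomino (by omega)
  have hT₂B := ih a₂ (by omega) b₂ _ hT₂ T₂' hT₂' hd (hd₂.trans hd) ▸ hT₂'
  have hTT := hB.eq_of_mem_of_mem hT₂B hT' (Finset.mem_insert_self _ _)
    (Finset.mem_insert_self _ _)
  have hdd := congrArg domino hTT
  rw [hd, domino_insert_hDomino (by omega), hDomino_inj] at hdd
  exact ha₂ hdd.1

theorem eq_of_domino_eq_of_forall_lt (hA : IsTrominoPacking A) (hB : IsTrominoPacking B)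
    (hM : monodicOf A = monodicOf B) (hS : leftDominoes A = leftDominoes B) {a b : ℕ}
    (ih : ∀ a₂ < a, ∀ b₂, ∀ T₂ ∈ A, ∀ T₂' ∈ B,
      domino T₂ = hDomino a₂ b₂ → domino T₂' = hDomino a₂ b₂ → T₂ = T₂')
    (hT : T ∈ A) (hT' : T' ∈ B) (hd : domino T = hDomino a b) (hd' : domino T' = hDomino a b) :
    T = T' := by
  have hl : MonominoLeft T ↔ MonominoLeft T' := by
    rw [← hA.domino_mem_leftDominoes_iff hT, ← hB.domino_mem_leftDominoes_iff hT', hS, hd, hd']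
  obtain ⟨a₁, b₁, r, c, hr, hc, rfl⟩ := (hA.1 T hT).exists_eq_insert_hDomino
  obtain ⟨a₂, b₂, r', c', hr', hc', rfl⟩ := (hB.1 T' hT').exists_eq_insert_hDomino
  rw [domino_insert_hDomino (by omega), hDomino_inj] at hd hd'
  obtain ⟨⟨ha₁, hb₁⟩, ⟨ha₂, hb₂⟩⟩ := And.intro hd hd'
  subst a₁ b₁ a₂ b₂
  rw [monominoLeft_insert_hDomino_iff (by omega), monominoLeft_insert_hDomino_iff (by omega)] at hl
  obtain rfl : c = c' := by omega
  rcases (by omega : r = r' ∨ (r = a + 1 ∧ r' + 1 = a) ∨ (r + 1 = a ∧ r' = a + 1)) with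
    rfl | ⟨rfl, h⟩ | ⟨h, rfl⟩
  · rfl
  · exact (hA.false_of_monomino_below_above hB hM ih hT hT' h hc').elim
  · exact (hB.false_of_monomino_below_above hA hM.symm
      (fun a₂ h b₂ T₂ h₂ T₂' h₂' hd hd' => (ih a₂ h b₂ T₂' h₂' T₂ h₂ hd' hd).symm)
      hT' hT h hc).elim

theorem eq_of_domino_eq (hA : IsTrominoPacking A) (hB : IsTrominoPacking B)
    (hM : monodicOf A = monodicOf B) (hS : leftDominoes A = leftDominoes B)
    (hT : T ∈ A) (hT' : T' ∈ B) (h : domino T = domino T') : T = T' := by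
  suffices key : ∀ a b, ∀ T ∈ A, ∀ T' ∈ B,
      domino T = hDomino a b → domino T' = hDomino a b → T = T' by
    obtain ⟨a, b, r, c, hr, -, rfl⟩ := (hA.1 T hT).exists_eq_insert_hDomino
    have hd : domino (insert (r, c) (hDomino a b)) = hDomino a b :=
      domino_insert_hDomino (by omega)
    exact key a b _ hT T' hT' hd (h ▸ hd)
  intro a
  induction a using Nat.strong_induction_on with
  | _ a ih => exact fun b T hT T' hT' => hA.eq_of_domino_eq_of_forall_lt hB hM hS ih hT hT'

theorem subset_of_monodicOf_eq (hA : IsTrominoPacking A) (hB : IsTrominoPacking B)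
    (hM : monodicOf A = monodicOf B) (hS : leftDominoes A = leftDominoes B) : A ⊆ B := by
  intro T hT
  obtain ⟨T', hT', hd⟩ := hB.exists_domino_eq (hM ▸ domino_mem_monodicOf hT)
    (hA.1 T hT).card_domino
  rwa [hA.eq_of_domino_eq hB hM hS hT hT' hd.symm]

theorem eq_of_monodicOf_eq (hA : IsTrominoPacking A) (hB : IsTrominoPacking B)
    (hM : monodicOf A = monodicOf B) (hS : leftDominoes A = leftDominoes B) : A = B :=
  (hA.subset_of_monodicOf_eq hB hM hS).antisymm (hB.subset_of_monodicOf_eq hA hM.symm hS.symm)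

end IsTrominoPacking

theorem IsTrominoTiling.isMonodicTiling_monodicOf {m n : ℕ} {A : Finset (Finset (ℕ × ℕ))}
    (h : IsTrominoTiling m n A) : IsMonodicTiling m n (monodicOf A) := by
  classical
  have hA := h.isTrominoPacking
  have hcard : 3 * A.card = m * n := by
    rw [← hA.card_sup, h.2.2, rect, Finset.card_product, Finset.card_range, Finset.card_range]
  refine ⟨fun X hX => ?_, fun X hX Y hY hne => hA.pairwiseDisjoint_monodicOf hX hY hne,
    (sup_monodicOf A).trans h.2.2, ?_, ?_⟩
  · obtain ⟨T, hT, rfl | rfl⟩ := mem_monodicOf.mp hX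
    exacts [Or.inl (hA.1 T hT).isDomino_domino, Or.inr (hA.1 T hT).isMonomino_monomino]
  · rw [hA.filter_isDomino_monodicOf, Finset.card_image_of_injOn hA.domino_injOn]
    omega
  · rw [hA.filter_isMonomino_monodicOf, Finset.card_image_of_injOn hA.monomino_injOn]
    omega

theorem card_filter_monodicOf_eq_le {m n : ℕ} {𝔗 : Finset (Finset (Finset (ℕ × ℕ)))}
    (h𝔗 : ∀ A ∈ 𝔗, IsTrominoTiling m n A) {M : Finset (Finset (ℕ × ℕ))}
    (hM : IsMonodicTiling m n M) : (𝔗.filter fun A => monodicOf A = M).card ≤ 2 ^ (m * n / 3) := by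
  classical
  calc (𝔗.filter fun A => monodicOf A = M).card
      ≤ (M.filter IsDomino).powerset.card := Finset.card_le_card_of_injOn leftDominoes ?_ ?_
    _ = 2 ^ (m * n / 3) := by rw [Finset.card_powerset, hM.2.2.2.1]
  · intro A hA
    obtain ⟨hA𝔗, rfl⟩ := Finset.mem_filter.mp hA
    exact Finset.mem_powerset.mpr (h𝔗 A hA𝔗).isTrominoPacking.leftDominoes_subset
  · intro A hA B hB h
    obtain ⟨hA, hAM⟩ := Finset.mem_filter.mp hA
    obtain ⟨hB, hBM⟩ := Finset.mem_filter.mp hB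
    exact (h𝔗 A hA).isTrominoPacking.eq_of_monodicOf_eq (h𝔗 B hB).isTrominoPacking
      (hAM.trans hBM.symm) h

theorem tromino_le_monodic_general (m n : ℕ) :
    Set.ncard {𝒯 : Finset (Finset (ℕ × ℕ)) | IsTrominoTiling m n 𝒯} ≤
      2 ^ (m * n / 3) *
        Set.ncard {𝒯 : Finset (Finset (ℕ × ℕ)) | IsMonodicTiling m n 𝒯} := by
  classical
  rw [ncard_setOf_eq_card_filter fun _ h => h.2.2, ncard_setOf_eq_card_filter fun _ h => h.2.2.1]
  refine Finset.card_le_mul_card_image_of_maps_to (f := monodicOf) (fun A hA => ?_) _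
    fun M hM => card_filter_monodicOf_eq_le (fun A hA => (Finset.mem_filter.mp hA).2)
      (Finset.mem_filter.mp hM).2
  have hM := (Finset.mem_filter.mp hA).2.isMonodicTiling_monodicOf
  exact Finset.mem_filter.mpr ⟨mem_powerset_powerset_of_sup_eq hM.2.2.1, hM⟩

/-- the number of tromino tilings of R(m,n) is at most
2^(mn/3) times the number of monodic tilings of R(m,n). -/
theorem tromino_le_monodic (m n : ℕ) (hm : 0 < m) (hn : 0 < n) (h3 : 3 ∣ m * n) :
    Set.ncard {𝒯 : Finset (Finset (ℕ × ℕ)) | IsTrominoTiling m n 𝒯} ≤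
      2 ^ (m * n / 3) *
        Set.ncard {𝒯 : Finset (Finset (ℕ × ℕ)) | IsMonodicTiling m n 𝒯} :=
  tromino_le_monodic_general m n
end
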